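/- arXiv:1411.3292 — 14 statements merged into one kernel-verified Lean document; each statement's English description precedes it below -/
import Mathlib

section
/- The minimum M-ary Bayesian error probability admits the information-spectrum characterization ε̄ = max_{Q_Y} sup_{γ ≥ 0} { Pr[ P_{VY}(V,Y) ≤ γ Q_Y(Y) ] − γ }, where the probability is under P_{VY}, the max over Q_Y being attained by Q_Y*(y) = max_{v'} P_{VY}(v', y)/μ with μ = Σ_y max_{v'} P_{VY}(v', y). -/
open scoped Classical
open Finset

lemma key_bound {V Y : Type*} [Fintype V] [Fintype Y]
    (P : V → Y → ℝ) (hP0 : ∀ v y, 0 ≤ P v y)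
    (vm : Y → V) (hvm : ∀ y v, P v y ≤ P (vm y) y)
    (QY : Y → ℝ) (hQ0 : ∀ y, 0 ≤ QY y) (γ : ℝ) (hγ : 0 ≤ γ) :
    ∑ v, ∑ y, (if P v y ≤ γ * QY y then P v y else 0) ≤
      (∑ v, ∑ y, P v y) - (∑ y, P (vm y) y) + γ * ∑ y, QY y := by
  have h1 : ∀ y, ∑ v, (if P v y ≤ γ * QY y then P v y else 0) ≤
      (∑ v, P v y) - P (vm y) y + γ * QY y := by
    intro y
    have hq : 0 ≤ γ * QY y := mul_nonneg hγ (hQ0 y)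
    by_cases h : P (vm y) y ≤ γ * QY y
    · have h2 : ∑ v, (if P v y ≤ γ * QY y then P v y else 0) ≤ ∑ v, P v y :=
        Finset.sum_le_sum fun v _ => by split_ifs; exacts [le_rfl, hP0 v y]
      linarith
    · have h2 : ∑ v, (if P v y ≤ γ * QY y then P v y else 0) ≤
          ∑ v, (P v y - if v = vm y then P v y else 0) := by
        refine Finset.sum_le_sum fun v _ => ?_
        split_ifs with h1 h2
        · exact absurd (h2 ▸ h1) h
        · simp
        · simp
        · simpa using hP0 v y
      have h3 : ∑ v, (P v y - if v = vm y then P v y else 0) =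
          (∑ v, P v y) - P (vm y) y := by
        rw [Finset.sum_sub_distrib, Finset.sum_ite_eq' Finset.univ (vm y) (fun v => P v y)]
        simp
      rw [h3] at h2
      linarith
  calc ∑ v, ∑ y, (if P v y ≤ γ * QY y then P v y else 0)
      = ∑ y, ∑ v, (if P v y ≤ γ * QY y then P v y else 0) := Finset.sum_comm
    _ ≤ ∑ y, ((∑ v, P v y) - P (vm y) y + γ * QY y) := Finset.sum_le_sum fun y _ => h1 y
    _ = (∑ v, ∑ y, P v y) - (∑ y, P (vm y) y) + γ * ∑ y, QY y := by
        rw [Finset.sum_add_distrib, Finset.sum_sub_distrib, Finset.mul_sum,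
          Finset.sum_comm]

/-- Theorem 1, information-spectrum form: the minimum Bayesian M-ary error
probability satisfies `ε̄ = max_{Q_Y} sup_{γ≥0} { Pr[P_{VY}(V,Y) ≤ γ Q_Y(Y)] − γ }`,
the maximum over `Q_Y` being attained by `Q_Y*(y) = max_v P_{VY}(v,y) / μ`. -/
theorem stmt_3 {V Y : Type*} [Fintype V] [Fintype Y] [Nonempty V]
    (P : V → Y → ℝ) (hP0 : ∀ v y, 0 ≤ P v y) (hP1 : ∑ v, ∑ y, P v y = 1)
    (μ : ℝ) (hμ : μ = ∑ y, ⨆ v, P v y) (hμpos : 0 < μ)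
    (Qstar : Y → ℝ) (hQstar : ∀ y, Qstar y = (⨆ v, P v y) / μ)
    (εbar : ℝ)
    (hε : εbar = sInf {e : ℝ | ∃ T : Y → V → ℝ,
        (∀ y v, 0 ≤ T y v) ∧ (∀ y, ∑ v, T y v = 1) ∧
        e = 1 - ∑ v, ∑ y, P v y * T y v}) :
    (∀ QY : Y → ℝ, (∀ y, 0 ≤ QY y) → (∑ y, QY y = 1) →
      sSup {x : ℝ | ∃ γ : ℝ, 0 ≤ γ ∧
          x = (∑ v, ∑ y, if P v y ≤ γ * QY y then P v y else 0) - γ} ≤ εbar) ∧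
    sSup {x : ℝ | ∃ γ : ℝ, 0 ≤ γ ∧
        x = (∑ v, ∑ y, if P v y ≤ γ * Qstar y then P v y else 0) - γ} = εbar := by
  -- argmax
  have hmax : ∀ y : Y, ∃ v : V, ∀ v', P v' y ≤ P v y := fun y =>
    Finite.exists_max fun v => P v y
  choose vm hvm using hmax
  have hsup : ∀ y, (⨆ v, P v y) = P (vm y) y := fun y =>
    le_antisymm (ciSup_le (hvm y))
      (le_ciSup (f := fun v => P v y) (Set.Finite.bddAbove (Set.finite_range _)) (vm y))
  have hμ' : μ = ∑ y, P (vm y) y := by rw [hμ]; exact Finset.sum_congr rfl fun y _ => hsup y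
  have hμ1 : μ ≤ 1 := by
    rw [hμ', ← hP1, Finset.sum_comm]
    exact Finset.sum_le_sum fun y _ =>
      Finset.single_le_sum (f := fun v => P v y) (fun v _ => hP0 v y) (Finset.mem_univ _)
  -- εbar = 1 - μ
  have hεval : εbar = 1 - μ := by
    rw [hε]
    have hmem : (1 - μ) ∈ {e : ℝ | ∃ T : Y → V → ℝ,
        (∀ y v, 0 ≤ T y v) ∧ (∀ y, ∑ v, T y v = 1) ∧
        e = 1 - ∑ v, ∑ y, P v y * T y v} := by
      refine ⟨fun y v => if v = vm y then 1 else 0, fun y v => by positivity,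
        fun y => by simp, ?_⟩
      have : ∑ v, ∑ y, P v y * (if v = vm y then 1 else 0) = μ := by
        rw [Finset.sum_comm, hμ']
        refine Finset.sum_congr rfl fun y _ => ?_
        rw [Finset.sum_eq_single (vm y)]
        · simp
        · intro v _ hv; simp [hv]
        · simp
      rw [this]
    have hlb : ∀ e ∈ {e : ℝ | ∃ T : Y → V → ℝ,
        (∀ y v, 0 ≤ T y v) ∧ (∀ y, ∑ v, T y v = 1) ∧
        e = 1 - ∑ v, ∑ y, P v y * T y v}, 1 - μ ≤ e := by
      rintro e ⟨T, hT0, hT1, rfl⟩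
      have hS : ∑ v, ∑ y, P v y * T y v ≤ μ := by
        rw [Finset.sum_comm, hμ']
        refine Finset.sum_le_sum fun y _ => ?_
        calc ∑ v, P v y * T y v ≤ ∑ v, P (vm y) y * T y v :=
              Finset.sum_le_sum fun v _ => mul_le_mul_of_nonneg_right (hvm y v) (hT0 y v)
          _ = P (vm y) y * ∑ v, T y v := by rw [Finset.mul_sum]
          _ = P (vm y) y := by rw [hT1 y, mul_one]
      linarith
    exact le_antisymm (csInf_le ⟨1 - μ, hlb⟩ hmem) (le_csInf ⟨_, hmem⟩ hlb)
  -- Qstar is a probability distribution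
  have hQs0 : ∀ y, 0 ≤ Qstar y := fun y => by
    rw [hQstar y, hsup y]; exact div_nonneg (hP0 _ _) hμpos.le
  have hQs1 : ∑ y, Qstar y = 1 := by
    have : ∑ y, Qstar y = (∑ y, ⨆ v, P v y) / μ := by
      rw [Finset.sum_div]; exact Finset.sum_congr rfl fun y _ => hQstar y
    rw [this, ← hμ, div_self hμpos.ne']
  -- general upper bound on elements of the sup set
  have hub : ∀ (QY : Y → ℝ), (∀ y, 0 ≤ QY y) → (∑ y, QY y = 1) →
      ∀ x ∈ {x : ℝ | ∃ γ : ℝ, 0 ≤ γ ∧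
        x = (∑ v, ∑ y, if P v y ≤ γ * QY y then P v y else 0) - γ}, x ≤ 1 - μ := by
    rintro QY hQ0 hQ1 x ⟨γ, hγ, rfl⟩
    have := key_bound P hP0 vm hvm QY hQ0 γ hγ
    rw [hP1, hQ1, ← hμ'] at this
    linarith
  constructor
  · intro QY hQ0 hQ1
    rw [hεval]
    exact Real.sSup_le (hub QY hQ0 hQ1) (by linarith)
  · rw [hεval]
    have hmem : (1 - μ) ∈ {x : ℝ | ∃ γ : ℝ, 0 ≤ γ ∧
        x = (∑ v, ∑ y, if P v y ≤ γ * Qstar y then P v y else 0) - γ} := by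
      refine ⟨μ, hμpos.le, ?_⟩
      have hcond : ∀ v y, P v y ≤ μ * Qstar y := by
        intro v y
        rw [hQstar y, mul_div_cancel₀ _ hμpos.ne', hsup y]
        exact hvm y v
      have : ∑ v, ∑ y, (if P v y ≤ μ * Qstar y then P v y else 0) = 1 := by
        rw [← hP1]
        exact Finset.sum_congr rfl fun v _ => Finset.sum_congr rfl fun y _ => by
          rw [if_pos (hcond v y)]
      rw [this]
    exact le_antisymm (Real.sSup_le (hub Qstar hQs0 hQs1) (by linarith))
      (le_csSup ⟨1 - μ, hub Qstar hQs0 hQs1⟩ hmem)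
end

section
/- The minimum M-ary Bayesian error probability equals the optimized binary hypothesis testing quantity: ε̄ = max_{Q_Y} α_{1/M}( P_{VY}, Q_V × Q_Y ), where Q_V is uniform on 𝒱 and the maximum is attained by Q_Y*(y) = max_{v'} P_{VY}(v', y)/μ with μ = Σ_y max_{v'} P_{VY}(v', y). -/
open scoped Classical
open Finset

/-- Theorem 1, meta-converse form: `ε̄ = max_{Q_Y} α_{1/M}(P_{VY}, Q_V × Q_Y)`
with `Q_V` uniform on `𝒱` (`|𝒱| = M`), the maximum being attained by
`Q_Y*(y) = max_v P_{VY}(v,y)/μ`. -/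
theorem stmt_4 {V Y : Type*} [Fintype V] [Fintype Y] [Nonempty V]
    (M : ℕ) (hM : M = Fintype.card V)
    (P : V → Y → ℝ) (hP0 : ∀ v y, 0 ≤ P v y) (hP1 : ∑ v, ∑ y, P v y = 1)
    (μ : ℝ) (hμ : μ = ∑ y, ⨆ v, P v y) (hμpos : 0 < μ)
    (Qstar : Y → ℝ) (hQstar : ∀ y, Qstar y = (⨆ v, P v y) / μ)
    (εbar : ℝ)
    (hε : εbar = sInf {e : ℝ | ∃ D : Y → V → ℝ,
        (∀ y v, 0 ≤ D y v) ∧ (∀ y, ∑ v, D y v = 1) ∧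
        e = 1 - ∑ v, ∑ y, P v y * D y v})
    -- `alpha β Q` is the Neyman–Pearson trade-off α_β(P_{VY}, Q_V × Q_Y)
    (alpha : ℝ → (Y → ℝ) → ℝ)
    (halpha : ∀ β QY, alpha β QY =
      sInf {e : ℝ | ∃ T : V → Y → ℝ, (∀ v y, 0 ≤ T v y ∧ T v y ≤ 1) ∧
        (∑ v, ∑ y, ((M : ℝ)⁻¹ * QY y) * T v y) ≤ β ∧
        e = ∑ v, ∑ y, P v y * (1 - T v y)}) :
    (∀ QY : Y → ℝ, (∀ y, 0 ≤ QY y) → (∑ y, QY y = 1) →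
      alpha ((M : ℝ)⁻¹) QY ≤ εbar) ∧
    alpha ((M : ℝ)⁻¹) Qstar = εbar := by
  classical
  have hMpos : 0 < (M : ℝ) := by
    have : 0 < M := hM ▸ Fintype.card_pos
    exact_mod_cast this
  have hle_sup : ∀ v y, P v y ≤ ⨆ v', P v' y := fun v y =>
    le_ciSup (Set.finite_range (fun v' => P v' y)).bddAbove v
  have hsup_mem : ∀ y : Y, ∃ v : V, P v y = ⨆ v', P v' y := fun _ =>
    exists_eq_ciSup_of_finite
  choose g hg using hsup_mem
  set T0 : V → Y → ℝ := fun v y => if v = g y then 1 else 0 with hT0def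
  have hT0sum : ∀ y, ∑ v, T0 v y = 1 := fun y => by simp [hT0def]
  have hT001 : ∀ v y, 0 ≤ T0 v y ∧ T0 v y ≤ 1 := by
    intro v y
    simp only [hT0def]
    split <;> norm_num
  have hPT0 : ∑ v, ∑ y, P v y * T0 v y = μ := by
    rw [Finset.sum_comm, hμ]
    refine Finset.sum_congr rfl fun y _ => ?_
    rw [← hg y]
    simp [hT0def, mul_ite]
  -- generic bound: ∑∑ P·D ≤ μ for any randomized decoder D
  have key : ∀ D : Y → V → ℝ, (∀ y v, 0 ≤ D y v) → (∀ y, ∑ v, D y v = 1) →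
      ∑ v, ∑ y, P v y * D y v ≤ μ := by
    intro D hD0 hD1
    rw [Finset.sum_comm, hμ]
    refine Finset.sum_le_sum fun y _ => ?_
    calc ∑ v, P v y * D y v ≤ ∑ v, (⨆ v', P v' y) * D y v :=
          Finset.sum_le_sum fun v _ =>
            mul_le_mul_of_nonneg_right (hle_sup v y) (hD0 y v)
      _ = (⨆ v', P v' y) * ∑ v, D y v := by rw [Finset.mul_sum]
      _ = ⨆ v', P v' y := by rw [hD1 y, mul_one]
  -- εbar = 1 - μ
  have hεbar : εbar = 1 - μ := by
    rw [hε]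
    apply le_antisymm
    · apply csInf_le
      · exact ⟨1 - μ, fun e he => by
          obtain ⟨D, hD0, hD1, rfl⟩ := he
          linarith [key D hD0 hD1]⟩
      · exact ⟨fun y v => T0 v y, fun y v => (hT001 v y).1, fun y => hT0sum y,
          by rw [hPT0]⟩
    · refine le_csInf ⟨1 - μ, fun y v => T0 v y, fun y v => (hT001 v y).1,
        fun y => hT0sum y, by rw [hPT0]⟩ ?_
      rintro e ⟨D, hD0, hD1, rfl⟩
      linarith [key D hD0 hD1]
  -- the alpha sets are bounded below by 0
  have halb : ∀ QY : Y → ℝ, BddBelow {e : ℝ | ∃ T : V → Y → ℝ,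
      (∀ v y, 0 ≤ T v y ∧ T v y ≤ 1) ∧
      (∑ v, ∑ y, ((M : ℝ)⁻¹ * QY y) * T v y) ≤ (M : ℝ)⁻¹ ∧
      e = ∑ v, ∑ y, P v y * (1 - T v y)} := by
    intro QY
    refine ⟨0, ?_⟩
    rintro e ⟨T, hT, _, rfl⟩
    refine Finset.sum_nonneg fun v _ => Finset.sum_nonneg fun y _ => ?_
    have := (hT v y).2
    have := hP0 v y
    nlinarith
  -- 1 - μ is in each alpha set (for QY summing to 1)
  have hamem : ∀ QY : Y → ℝ, (∑ y, QY y = 1) →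
      (1 - μ) ∈ {e : ℝ | ∃ T : V → Y → ℝ, (∀ v y, 0 ≤ T v y ∧ T v y ≤ 1) ∧
        (∑ v, ∑ y, ((M : ℝ)⁻¹ * QY y) * T v y) ≤ (M : ℝ)⁻¹ ∧
        e = ∑ v, ∑ y, P v y * (1 - T v y)} := by
    intro QY hQY1
    refine ⟨T0, hT001, ?_, ?_⟩
    · have : ∑ v, ∑ y, ((M : ℝ)⁻¹ * QY y) * T0 v y = (M : ℝ)⁻¹ := by
        rw [Finset.sum_comm]
        have : ∀ y ∈ Finset.univ (α := Y),
            ∑ v, ((M : ℝ)⁻¹ * QY y) * T0 v y = (M : ℝ)⁻¹ * QY y := by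
          intro y _
          rw [← Finset.mul_sum, hT0sum, mul_one]
        rw [Finset.sum_congr rfl this, ← Finset.mul_sum, hQY1, mul_one]
      exact le_of_eq this
    · have : ∑ v, ∑ y, P v y * (1 - T0 v y)
          = (∑ v, ∑ y, P v y) - ∑ v, ∑ y, P v y * T0 v y := by
        rw [← Finset.sum_sub_distrib]
        refine Finset.sum_congr rfl fun v _ => ?_
        rw [← Finset.sum_sub_distrib]
        exact Finset.sum_congr rfl fun y _ => by ring
      rw [this, hP1, hPT0]
  -- Qstar is a pmf
  have hQstar1 : ∑ y, Qstar y = 1 := by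
    have : ∑ y, Qstar y = (∑ y, ⨆ v, P v y) / μ := by
      rw [Finset.sum_div]
      exact Finset.sum_congr rfl fun y _ => hQstar y
    rw [this, ← hμ, div_self (ne_of_gt hμpos)]
  -- part 1
  have part1 : ∀ QY : Y → ℝ, (∀ y, 0 ≤ QY y) → (∑ y, QY y = 1) →
      alpha ((M : ℝ)⁻¹) QY ≤ εbar := by
    intro QY _ hQY1
    rw [halpha, hεbar]
    exact csInf_le (halb QY) (hamem QY hQY1)
  refine ⟨part1, ?_⟩
  -- part 2
  apply le_antisymm (part1 Qstar (fun y => by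
    rw [hQstar]
    exact div_nonneg (le_trans (hP0 (Classical.arbitrary V) y)
      (hle_sup (Classical.arbitrary V) y)) (le_of_lt hμpos)) hQstar1)
  rw [halpha, hεbar]
  refine le_csInf ⟨1 - μ, hamem Qstar hQstar1⟩ ?_
  rintro e ⟨T, hT, hcon, rfl⟩
  -- show ∑∑ P T ≤ μ
  have hstep : ∀ v y, P v y * T v y ≤ (μ * M) * (((M : ℝ)⁻¹ * Qstar y) * T v y) := by
    intro v y
    have h1 : μ * Qstar y = ⨆ v', P v' y := by
      rw [hQstar, mul_div_cancel₀ _ (ne_of_gt hμpos)]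
    have h2 : (μ * M) * (((M : ℝ)⁻¹ * Qstar y) * T v y) = (μ * Qstar y) * T v y := by
      field_simp
    rw [h2, h1]
    exact mul_le_mul_of_nonneg_right (hle_sup v y) (hT v y).1
  have hPT : ∑ v, ∑ y, P v y * T v y ≤ μ := by
    calc ∑ v, ∑ y, P v y * T v y
        ≤ ∑ v, ∑ y, (μ * M) * (((M : ℝ)⁻¹ * Qstar y) * T v y) :=
          Finset.sum_le_sum fun v _ => Finset.sum_le_sum fun y _ => hstep v y
      _ = (μ * M) * ∑ v, ∑ y, ((M : ℝ)⁻¹ * Qstar y) * T v y := by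
          rw [Finset.mul_sum]
          exact Finset.sum_congr rfl fun v _ => by rw [Finset.mul_sum]
      _ ≤ (μ * M) * (M : ℝ)⁻¹ := by
          apply mul_le_mul_of_nonneg_left hcon
          positivity
      _ = μ := by field_simp
  have hsplit : ∑ v, ∑ y, P v y * (1 - T v y)
      = (∑ v, ∑ y, P v y) - ∑ v, ∑ y, P v y * T v y := by
    rw [← Finset.sum_sub_distrib]
    refine Finset.sum_congr rfl fun v _ => ?_
    rw [← Finset.sum_sub_distrib]
    exact Finset.sum_congr rfl fun y _ => by ring
  rw [hsplit, hP1]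
  linarith
end

section
/- For every (not necessarily optimal) M-ary test P_{V̂|Y} and every joint distribution Q_{VY}, the error probability satisfies ε̄(P_{V̂|Y}) ≥ α_{ε₁(Q_{VY}, P_{V̂|Y})}( P_{VY}, Q_{VY} ), where ε₁(Q_{VY}, P_{V̂|Y}) = Σ_{v,y} Q_{VY}(v,y) P_{V̂|Y}(v|y); moreover equality holds for Q_{VY} = P_{VY}, so ε̄(P_{V̂|Y}) = max_{Q_{VY}} α_{ε₁(Q_{VY}, P_{V̂|Y})}( P_{VY}, Q_{VY} ). -/
open scoped Classical
open Finset

/-- Theorem 2, meta-converse form for an arbitrary M-ary test `D`: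
`ε̄(D) ≥ α_{ε₁(Q,D)}(P_{VY}, Q_{VY})` for every `Q_{VY}`, with equality for
`Q_{VY} = P_{VY}`; hence `ε̄(D) = max_{Q_{VY}} α_{ε₁(Q,D)}(P_{VY}, Q_{VY})`. -/
theorem stmt_5 {V Y : Type*} [Fintype V] [Fintype Y]
    (P : V → Y → ℝ) (hP0 : ∀ v y, 0 ≤ P v y) (hP1 : ∑ v, ∑ y, P v y = 1)
    (D : Y → V → ℝ) (hD0 : ∀ y v, 0 ≤ D y v) (hD1 : ∀ y, ∑ v, D y v = 1)
    (εD : ℝ) (hεD : εD = 1 - ∑ v, ∑ y, P v y * D y v)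
    -- `alpha β Q` is α_β(P_{VY}, Q_{VY})
    (alpha : ℝ → (V → Y → ℝ) → ℝ)
    (halpha : ∀ β Q, alpha β Q =
      sInf {e : ℝ | ∃ T : V → Y → ℝ, (∀ v y, 0 ≤ T v y ∧ T v y ≤ 1) ∧
        (∑ v, ∑ y, Q v y * T v y) ≤ β ∧
        e = ∑ v, ∑ y, P v y * (1 - T v y)}) :
    (∀ Q : V → Y → ℝ, (∀ v y, 0 ≤ Q v y) → (∑ v, ∑ y, Q v y = 1) →
      εD ≥ alpha (∑ v, ∑ y, Q v y * D y v) Q) ∧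
    εD = alpha (∑ v, ∑ y, P v y * D y v) P := by
  have hD1' : ∀ y v, D y v ≤ 1 := by
    intro y v
    calc D y v ≤ ∑ v, D y v :=
          Finset.single_le_sum (fun i _ => hD0 y i) (Finset.mem_univ v)
      _ = 1 := hD1 y
  have hsplit : ∀ T : V → Y → ℝ,
      ∑ v, ∑ y, P v y * (1 - T v y)
        = (∑ v, ∑ y, P v y) - ∑ v, ∑ y, P v y * T v y := by
    intro T
    simp [mul_sub, Finset.sum_sub_distrib]
  have hbdd : ∀ (Q : V → Y → ℝ) (β : ℝ), BddBelow
      {e : ℝ | ∃ T : V → Y → ℝ, (∀ v y, 0 ≤ T v y ∧ T v y ≤ 1) ∧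
        (∑ v, ∑ y, Q v y * T v y) ≤ β ∧
        e = ∑ v, ∑ y, P v y * (1 - T v y)} := by
    intro Q β
    refine ⟨0, ?_⟩
    rintro e ⟨T, hT, _, rfl⟩
    apply Finset.sum_nonneg; intro v _
    apply Finset.sum_nonneg; intro y _
    exact mul_nonneg (hP0 v y) (by linarith [(hT v y).2])
  have hmem : ∀ Q : V → Y → ℝ, εD ∈
      {e : ℝ | ∃ T : V → Y → ℝ, (∀ v y, 0 ≤ T v y ∧ T v y ≤ 1) ∧
        (∑ v, ∑ y, Q v y * T v y) ≤ (∑ v, ∑ y, Q v y * D y v) ∧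
        e = ∑ v, ∑ y, P v y * (1 - T v y)} := by
    intro Q
    refine ⟨fun v y => D y v, fun v y => ⟨hD0 y v, hD1' y v⟩, le_refl _, ?_⟩
    rw [hsplit, hP1, hεD]
  constructor
  · intro Q hQ0 hQ1
    rw [halpha]
    exact csInf_le (hbdd Q _) (hmem Q)
  · rw [halpha]
    refine le_antisymm (le_csInf ⟨εD, hmem P⟩ ?_) (csInf_le (hbdd P _) (hmem P))
    rintro e ⟨T, hT, hle, rfl⟩
    rw [hsplit, hP1, hεD]
    linarith
end

section
/- For every M-ary test P_{V̂|Y}: ε̄(P_{V̂|Y}) = max_{Q_{VY}} sup_{γ ≥ 0} { Pr[ P_{VY}(V,Y) ≤ γ Q_{VY}(V,Y) ] − γ ε₁(Q_{VY}, P_{V̂|Y}) }, where the probability is under P_{VY} and ε₁(Q_{VY}, P_{V̂|Y}) = Σ_{v,y} Q_{VY}(v,y) P_{V̂|Y}(v|y); the maximum is attained at Q_{VY} = P_{VY}, γ = 1. -/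
open scoped Classical
open Finset

/-- Theorem 2, information-spectrum form for an arbitrary M-ary test `D`:
`ε̄(D) = max_{Q_{VY}} sup_{γ≥0} { Pr[P_{VY}(V,Y) ≤ γ Q_{VY}(V,Y)] − γ ε₁(Q,D) }`,
the maximum being attained at `Q_{VY} = P_{VY}`, `γ = 1`. -/
theorem stmt_6 {V Y : Type*} [Fintype V] [Fintype Y]
    (P : V → Y → ℝ) (hP0 : ∀ v y, 0 ≤ P v y) (hP1 : ∑ v, ∑ y, P v y = 1)
    (D : Y → V → ℝ) (hD0 : ∀ y v, 0 ≤ D y v) (hD1 : ∀ y, ∑ v, D y v = 1)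
    (εD : ℝ) (hεD : εD = 1 - ∑ v, ∑ y, P v y * D y v) :
    (∀ Q : V → Y → ℝ, (∀ v y, 0 ≤ Q v y) → (∑ v, ∑ y, Q v y = 1) →
      ∀ γ : ℝ, 0 ≤ γ →
        (∑ v, ∑ y, if P v y ≤ γ * Q v y then P v y else 0) -
          γ * (∑ v, ∑ y, Q v y * D y v) ≤ εD) ∧
    (∑ v, ∑ y, if P v y ≤ 1 * P v y then P v y else 0) -
      1 * (∑ v, ∑ y, P v y * D y v) = εD := by
  have hD1' : ∀ y v, D y v ≤ 1 := by
    intro y v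
    calc D y v ≤ ∑ v', D y v' :=
      Finset.single_le_sum (fun i _ => hD0 y i) (Finset.mem_univ v)
    _ = 1 := hD1 y
  constructor
  · intro Q hQ0 hQ1 γ hγ
    have hεD' : εD = ∑ v, ∑ y, (P v y - P v y * D y v) := by
      rw [hεD, ← hP1]
      simp [Finset.sum_sub_distrib]
    rw [hεD']
    have : γ * (∑ v, ∑ y, Q v y * D y v) = ∑ v, ∑ y, γ * (Q v y * D y v) := by
      rw [Finset.mul_sum]
      exact Finset.sum_congr rfl fun v _ => Finset.mul_sum _ _ _
    rw [this, ← Finset.sum_sub_distrib]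
    refine Finset.sum_le_sum fun v _ => ?_
    rw [← Finset.sum_sub_distrib]
    refine Finset.sum_le_sum fun y _ => ?_
    by_cases h : P v y ≤ γ * Q v y
    · simp only [h, if_true]
      have : P v y * D y v ≤ γ * Q v y * D y v :=
        mul_le_mul_of_nonneg_right h (hD0 y v)
      nlinarith
    · simp only [h, if_false]
      have h1 : 0 ≤ γ * (Q v y * D y v) := by exact mul_nonneg hγ (mul_nonneg (hQ0 v y) (hD0 y v))
      have h2 : P v y * D y v ≤ P v y :=
        mul_le_of_le_one_right (hP0 v y) (hD1' y v)
      linarith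
  · simp [hP1, hεD]
end

section
/- For the maximum-metric test P^{(q)} that picks uniformly among maximizers of a positive metric q(v,y), the distribution Q^{(q)}_{VY}(v,y) = P_{VY}(v,y)·(max_{v'} q(v',y)/q(v,y))/μ' (with μ' the normalizer) achieves equality in the meta-converse: ε̄(P^{(q)}) = α_{ε₁(Q^{(q)}, P^{(q)})}( P_{VY}, Q^{(q)} ). -/
open scoped Classical
open Finset

/-!
Since `q ≤ max_{v'} q(v', ·)`, the likelihood-ratio gap `P - μ' Q^{(q)} = P (1 - max_{v'} q(v', y) / q)`
is nonpositive, and it vanishes wherever `v` maximizes `q(·, y)`. The maximum-metric test is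
therefore supported where `P ≥ μ' Q^{(q)}`, i.e. it is a Neyman–Pearson test with threshold `μ'`,
and the Neyman–Pearson lemma makes it optimal at its own type-1 error.
-/

section NeymanPearson

variable {V Y : Type*} [Fintype V] [Fintype Y]

def IsTest (T : V → Y → ℝ) : Prop := ∀ v y, 0 ≤ T v y ∧ T v y ≤ 1

/-- The paper's `α_β(P, Q)`. -/
noncomputable def minTypeZeroError (P Q : V → Y → ℝ) (β : ℝ) : ℝ :=
  sInf {e : ℝ | ∃ T : V → Y → ℝ, IsTest T ∧
    (∑ v, ∑ y, Q v y * T v y) ≤ β ∧ e = ∑ v, ∑ y, P v y * (1 - T v y)}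

variable {P Q φ T : V → Y → ℝ} {c : ℝ}

theorem sum_mul_le_sum_mul_of_neymanPearson (hc : 0 ≤ c) (hT : IsTest T)
    (h1 : ∀ v y, c * Q v y < P v y → φ v y = 1) (h0 : ∀ v y, P v y < c * Q v y → φ v y = 0)
    (hQ : ∑ v, ∑ y, Q v y * T v y ≤ ∑ v, ∑ y, Q v y * φ v y) :
    ∑ v, ∑ y, P v y * T v y ≤ ∑ v, ∑ y, P v y * φ v y := by
  have hterm : ∀ v y, 0 ≤ (P v y - c * Q v y) * (φ v y - T v y) := by
    intro v y
    obtain ⟨hT0, hT1⟩ := hT v y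
    rcases lt_trichotomy (c * Q v y) (P v y) with hlt | heq | hgt
    · rw [h1 v y hlt]; exact mul_nonneg (by linarith) (by linarith)
    · rw [heq, sub_self, zero_mul]
    · rw [h0 v y hgt]; exact mul_nonneg_of_nonpos_of_nonpos (by linarith) (by linarith)
  have hexpand : ∑ v, ∑ y, (P v y - c * Q v y) * (φ v y - T v y)
      = (∑ v, ∑ y, P v y * φ v y - ∑ v, ∑ y, P v y * T v y)
        - c * (∑ v, ∑ y, Q v y * φ v y - ∑ v, ∑ y, Q v y * T v y) := by
    simp only [mul_sum, ← sum_sub_distrib]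
    exact sum_congr rfl fun v _ => sum_congr rfl fun y _ => by ring
  have hsum := sum_nonneg fun v (_ : v ∈ univ) => sum_nonneg fun y (_ : y ∈ univ) => hterm v y
  rw [hexpand] at hsum
  linarith [mul_nonneg hc (sub_nonneg.2 hQ)]

theorem sum_mul_one_sub (T : V → Y → ℝ) :
    ∑ v, ∑ y, P v y * (1 - T v y) = ∑ v, ∑ y, P v y - ∑ v, ∑ y, P v y * T v y := by
  simp only [mul_sub, mul_one, sum_sub_distrib]

theorem minTypeZeroError_eq_of_neymanPearson (hφ : IsTest φ) (hc : 0 ≤ c)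
    (h1 : ∀ v y, c * Q v y < P v y → φ v y = 1) (h0 : ∀ v y, P v y < c * Q v y → φ v y = 0) :
    minTypeZeroError P Q (∑ v, ∑ y, Q v y * φ v y) = ∑ v, ∑ y, P v y * (1 - φ v y) := by
  refine IsLeast.csInf_eq ⟨⟨φ, hφ, le_rfl, rfl⟩, ?_⟩
  rintro e ⟨T, hT, hQ, rfl⟩
  rw [sum_mul_one_sub, sum_mul_one_sub]
  linarith [sum_mul_le_sum_mul_of_neymanPearson hc hT h1 h0 hQ]

end NeymanPearson

theorem isTest_maxMetric {V Y : Type*} [Fintype V] (q : V → Y → ℝ) (Pq : Y → V → ℝ)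
    (hPq : ∀ y v, Pq y v =
      if q v y = (⨆ v', q v' y) then
        ((univ.filter (fun v' : V => q v' y = (⨆ v'', q v'' y))).card : ℝ)⁻¹
      else 0) :
    IsTest fun v y => Pq y v := by
  intro v y
  dsimp only
  rw [hPq]
  split_ifs with hmax
  · have hcard : (1 : ℝ) ≤ (univ.filter (fun v' : V => q v' y = ⨆ v'', q v'' y)).card := by
      exact_mod_cast card_pos.2 ⟨v, mem_filter.2 ⟨mem_univ v, hmax⟩⟩
    exact ⟨by positivity, inv_le_one_of_one_le₀ hcard⟩
  · exact ⟨le_rfl, zero_le_one⟩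

theorem stmt_7_general {V Y : Type*} [Fintype V] [Fintype Y]
    (P : V → Y → ℝ) (hP0 : ∀ v y, 0 ≤ P v y) (hP1 : ∑ v, ∑ y, P v y = 1)
    (q : V → Y → ℝ) (hq : ∀ v y, 0 < q v y)
    -- the maximum-metric test
    (Pq : Y → V → ℝ)
    (hPq : ∀ y v, Pq y v =
      if q v y = (⨆ v', q v' y) then
        ((univ.filter (fun v' : V => q v' y = (⨆ v'', q v'' y))).card : ℝ)⁻¹
      else 0)
    -- the auxiliary distribution and its normalizer
    (μ' : ℝ) (hμ' : μ' = ∑ v, ∑ y, P v y * ((⨆ v', q v' y) / q v y))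
    (Qq : V → Y → ℝ)
    (hQq : ∀ v y, Qq v y = P v y * ((⨆ v', q v' y) / q v y) / μ') :
    1 - ∑ v, ∑ y, P v y * Pq y v =
      sInf {e : ℝ | ∃ T : V → Y → ℝ, (∀ v y, 0 ≤ T v y ∧ T v y ≤ 1) ∧
        (∑ v, ∑ y, Qq v y * T v y) ≤ (∑ v, ∑ y, Qq v y * Pq y v) ∧
        e = ∑ v, ∑ y, P v y * (1 - T v y)} := by
  have hratio : ∀ v y, 1 ≤ (⨆ v', q v' y) / q v y := fun v y =>
    (one_le_div (hq v y)).2 (le_ciSup (Set.finite_range fun v' => q v' y).bddAbove v)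
  have hP_le : ∀ v y, P v y ≤ P v y * ((⨆ v', q v' y) / q v y) := fun v y =>
    le_mul_of_one_le_right (hP0 v y) (hratio v y)
  have hμ'_pos : 0 < μ' :=
    calc 0 < ∑ v, ∑ y, P v y := hP1 ▸ one_pos
      _ ≤ μ' := hμ' ▸ sum_le_sum fun v _ => sum_le_sum fun y _ => hP_le v y
  have hμ'Qq : ∀ v y, μ' * Qq v y = P v y * ((⨆ v', q v' y) / q v y) := fun v y => by
    rw [hQq]; field_simp
  have h1 : ∀ v y, μ' * Qq v y < P v y → Pq y v = 1 := fun v y h =>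
    absurd (hP_le v y) (by rwa [hμ'Qq, ← not_le] at h)
  have h0 : ∀ v y, P v y < μ' * Qq v y → Pq y v = 0 := by
    intro v y h
    rw [hPq, if_neg]
    intro hmax
    rw [hμ'Qq, ← hmax, div_self (hq v y).ne', mul_one] at h
    exact h.false
  calc 1 - ∑ v, ∑ y, P v y * Pq y v = ∑ v, ∑ y, P v y * (1 - Pq y v) := by
        rw [sum_mul_one_sub, hP1]
    _ = _ := (minTypeZeroError_eq_of_neymanPearson (isTest_maxMetric q Pq hPq) hμ'_pos.le h1 h0).symm

/-- Corollary 1: for the maximum-metric test `P^{(q)}` (uniform tie-breaking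
among maximizers of a strictly positive metric `q`), the auxiliary distribution
`Q^{(q)}(v,y) = P(v,y) (max_{v'} q(v',y)) / (q(v,y) μ')` achieves equality in
the meta-converse: `ε̄(P^{(q)}) = α_{ε₁(Q^{(q)},P^{(q)})}(P_{VY}, Q^{(q)})`. -/
theorem stmt_7 {V Y : Type*} [Fintype V] [Fintype Y] [Nonempty V]
    (P : V → Y → ℝ) (hP0 : ∀ v y, 0 ≤ P v y) (hP1 : ∑ v, ∑ y, P v y = 1)
    (q : V → Y → ℝ) (hq : ∀ v y, 0 < q v y)
    -- the maximum-metric test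
    (Pq : Y → V → ℝ)
    (hPq : ∀ y v, Pq y v =
      if q v y = (⨆ v', q v' y) then
        ((univ.filter (fun v' : V => q v' y = (⨆ v'', q v'' y))).card : ℝ)⁻¹
      else 0)
    -- the auxiliary distribution and its normalizer
    (μ' : ℝ) (hμ' : μ' = ∑ v, ∑ y, P v y * ((⨆ v', q v' y) / q v y))
    (Qq : V → Y → ℝ)
    (hQq : ∀ v y, Qq v y = P v y * ((⨆ v', q v' y) / q v y) / μ') :
    1 - ∑ v, ∑ y, P v y * Pq y v =
      sInf {e : ℝ | ∃ T : V → Y → ℝ, (∀ v y, 0 ≤ T v y ∧ T v y ≤ 1) ∧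
        (∑ v, ∑ y, Qq v y * T v y) ≤ (∑ v, ∑ y, Qq v y * Pq y v) ∧
        e = ∑ v, ∑ y, P v y * (1 - T v y)} :=
  stmt_7_general P hP0 hP1 q hq Pq hPq μ' hμ' Qq hQq
end

section
/- For discrete distributions P, Q on 𝒴 and γ' ≥ 0, if 0 ≤ β ≤ Q[P(Y)/Q(Y) > γ'] / P[P(Y)/Q(Y) > γ'], then α_β(P,Q) ≥ (1 − γ'β) · P[P(Y)/Q(Y) ≤ γ']. -/
open scoped Classical
open Finset

/-- Lemma 2 (Poor–Verdú-type relaxation): if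
`0 ≤ β ≤ Q[P(Y) > γ'Q(Y)] / P[P(Y) > γ'Q(Y)]`, then
`α_β(P,Q) ≥ (1 − γ'β) · P[P(Y) ≤ γ'Q(Y)]`. -/
theorem stmt_8 {Y : Type*} [Fintype Y]
    (P Q : Y → ℝ) (hP0 : ∀ y, 0 ≤ P y) (hP1 : ∑ y, P y = 1)
    (hQ0 : ∀ y, 0 ≤ Q y) (hQ1 : ∑ y, Q y = 1)
    (γ' : ℝ) (hγ : 0 ≤ γ') (β : ℝ) (hβ0 : 0 ≤ β)
    (hβ : β ≤ (∑ y, if γ' * Q y < P y then Q y else 0) /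
              (∑ y, if γ' * Q y < P y then P y else 0)) :
    sInf {e : ℝ | ∃ T : Y → ℝ, (∀ y, 0 ≤ T y ∧ T y ≤ 1) ∧
        (∑ y, Q y * T y) ≤ β ∧ e = ∑ y, P y * (1 - T y)} ≥
      (1 - γ' * β) * (∑ y, if P y ≤ γ' * Q y then P y else 0) := by
  set sA : ℝ := ∑ y, if P y ≤ γ' * Q y then P y else 0 with hsA
  set bP : ℝ := ∑ y, if γ' * Q y < P y then P y else 0 with hbP
  set bQ : ℝ := ∑ y, if γ' * Q y < P y then Q y else 0 with hbQ
  have hbP0 : 0 ≤ bP := Finset.sum_nonneg fun y _ => by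
    split_ifs <;> [exact hP0 y; exact le_rfl]
  have hbQ0 : 0 ≤ bQ := Finset.sum_nonneg fun y _ => by
    split_ifs <;> [exact hQ0 y; exact le_rfl]
  have hsA0 : 0 ≤ sA := Finset.sum_nonneg fun y _ => by
    split_ifs <;> [exact hP0 y; exact le_rfl]
  have hβb : β * bP ≤ bQ := by
    rcases eq_or_lt_of_le hbP0 with h | h
    · have : β ≤ 0 := by rwa [← h, div_zero] at hβ
      nlinarith
    · exact (le_div_iff₀ h).mp hβ
  have hsum : sA + bP = 1 := by
    rw [← hP1, hsA, hbP, ← Finset.sum_add_distrib]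
    refine Finset.sum_congr rfl fun y _ => ?_
    split_ifs <;> linarith
  refine le_csInf ⟨1, fun _ => 0, fun y => ⟨le_rfl, zero_le_one⟩,
    by simpa using hβ0, by simp [hP1]⟩ ?_
  rintro e ⟨T, hT, hQT, rfl⟩
  have key : ∀ y ∈ Finset.univ,
      (if P y ≤ γ' * Q y then P y else 0) + γ' * (if γ' * Q y < P y then Q y else 0)
        - γ' * (Q y * T y) ≤ P y * (1 - T y) := by
    intro y _
    obtain ⟨h0, h1⟩ := hT y
    by_cases h : P y ≤ γ' * Q y
    · simp only [h, if_pos, not_lt.mpr h, if_neg, not_false_iff]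
      have := hQ0 y
      nlinarith
    · push_neg at h
      simp only [if_neg (not_le.mpr (by linarith : γ' * Q y < P y)), if_pos h]
      nlinarith
  have H := Finset.sum_le_sum key
  have Hl : (∑ y, ((if P y ≤ γ' * Q y then P y else 0)
      + γ' * (if γ' * Q y < P y then Q y else 0) - γ' * (Q y * T y)))
      = sA + γ' * bQ - γ' * ∑ y, Q y * T y := by
    rw [Finset.sum_sub_distrib, Finset.sum_add_distrib, ← Finset.mul_sum, ← Finset.mul_sum]
  rw [Hl] at H
  have hQTle : γ' * (∑ y, Q y * T y) ≤ γ' * β := by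
    exact mul_le_mul_of_nonneg_left hQT hγ
  nlinarith [mul_le_mul_of_nonneg_left hβb hγ,
    mul_le_mul_of_nonneg_left hQT hγ, mul_nonneg (mul_nonneg hγ hβ0) hsA0,
    congrArg (fun x => γ' * β * x) hsum]
end

section
/- The minimum M-ary Bayesian error probability satisfies the Poor–Verdú-type identity ε̄ = max_{γ ≥ 0} { (1 − γ) · Pr[ P_{VY}(V,Y) ≤ γ Q_Y*(Y) ] }, where Q_Y*(y) = max_{v'} P_{VY}(v', y)/μ and μ = Σ_y max_{v'} P_{VY}(v', y); the maximum is attained at γ = μ. -/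
open scoped Classical
open Finset

/-- Poor–Verdú-type identity: `ε̄ = max_{γ≥0} (1−γ) Pr[P_{VY}(V,Y) ≤ γ Q_Y*(Y)]`
with `Q_Y*(y) = max_v P_{VY}(v,y)/μ`; the maximum is attained at `γ = μ`. -/
theorem stmt_9 {V Y : Type*} [Fintype V] [Fintype Y] [Nonempty V]
    (P : V → Y → ℝ) (hP0 : ∀ v y, 0 ≤ P v y) (hP1 : ∑ v, ∑ y, P v y = 1)
    (μ : ℝ) (hμ : μ = ∑ y, ⨆ v, P v y) (hμpos : 0 < μ)
    (Qstar : Y → ℝ) (hQstar : ∀ y, Qstar y = (⨆ v, P v y) / μ)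
    (εbar : ℝ)
    (hε : εbar = sInf {e : ℝ | ∃ T : Y → V → ℝ,
        (∀ y v, 0 ≤ T y v) ∧ (∀ y, ∑ v, T y v = 1) ∧
        e = 1 - ∑ v, ∑ y, P v y * T y v}) :
    (∀ γ : ℝ, 0 ≤ γ →
      (1 - γ) * (∑ v, ∑ y, if P v y ≤ γ * Qstar y then P v y else 0) ≤ εbar) ∧
    (1 - μ) * (∑ v, ∑ y, if P v y ≤ μ * Qstar y then P v y else 0) = εbar := by
  have hbdd : ∀ y : Y, BddAbove (Set.range fun v => P v y) :=
    fun y => Set.Finite.bddAbove (Set.finite_range _)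
  have hattain : ∀ y : Y, ∃ v0 : V, (⨆ v, P v y) = P v0 y ∧ ∀ v, P v y ≤ P v0 y := by
    intro y
    obtain ⟨v0, hv0⟩ := Finite.exists_max (fun v => P v y)
    exact ⟨v0, le_antisymm (ciSup_le hv0) (le_ciSup (hbdd y) v0), hv0⟩
  have hle : ∀ v y, P v y ≤ ⨆ v', P v' y := fun v y => le_ciSup (hbdd y) v
  have hS0 : ∀ y, 0 ≤ ⨆ v, P v y :=
    fun y => le_trans (hP0 (Classical.arbitrary V) y) (hle _ y)
  have hsum1' : ∑ y, ∑ v, P v y = 1 := by rw [Finset.sum_comm]; exact hP1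
  have hμ1 : μ ≤ 1 := by
    rw [hμ, ← hsum1']
    apply Finset.sum_le_sum
    intro y _
    obtain ⟨v0, h1, _⟩ := hattain y
    rw [h1]
    exact Finset.single_le_sum (fun v _ => hP0 v y) (Finset.mem_univ v0)
  -- εbar = 1 - μ
  have hmem : (1 - μ) ∈ {e : ℝ | ∃ T : Y → V → ℝ,
      (∀ y v, 0 ≤ T y v) ∧ (∀ y, ∑ v, T y v = 1) ∧
      e = 1 - ∑ v, ∑ y, P v y * T y v} := by
    refine ⟨fun y v => if v = Classical.choose (hattain y) then 1 else 0, ?_, ?_, ?_⟩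
    · intro y v; dsimp only; split_ifs <;> norm_num
    · intro y; simp
    · have key : ∀ y : Y,
          ∑ v, P v y * (if v = Classical.choose (hattain y) then 1 else 0)
            = ⨆ v, P v y := by
        intro y
        rw [Finset.sum_congr rfl
          (fun v _ => by rw [mul_ite, mul_one, mul_zero] :
            ∀ v ∈ Finset.univ, P v y * (if v = Classical.choose (hattain y) then 1 else 0)
              = if v = Classical.choose (hattain y) then P v y else 0)]
        rw [Finset.sum_ite_eq' Finset.univ _ (fun v => P v y),
          if_pos (Finset.mem_univ _)]
        exact ((Classical.choose_spec (hattain y)).1).symm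
      rw [Finset.sum_comm, Finset.sum_congr rfl fun y _ => key y, ← hμ]
  have hlb : ∀ e ∈ {e : ℝ | ∃ T : Y → V → ℝ,
      (∀ y v, 0 ≤ T y v) ∧ (∀ y, ∑ v, T y v = 1) ∧
      e = 1 - ∑ v, ∑ y, P v y * T y v}, 1 - μ ≤ e := by
    rintro e ⟨T, hT0, hT1, rfl⟩
    have hub : ∑ v, ∑ y, P v y * T y v ≤ μ := by
      rw [Finset.sum_comm, hμ]
      apply Finset.sum_le_sum
      intro y _
      calc ∑ v, P v y * T y v ≤ ∑ v, (⨆ v', P v' y) * T y v :=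
            Finset.sum_le_sum fun v _ => mul_le_mul_of_nonneg_right (hle v y) (hT0 y v)
        _ = (⨆ v', P v' y) * ∑ v, T y v := by rw [Finset.mul_sum]
        _ = ⨆ v', P v' y := by rw [hT1 y, mul_one]
    linarith
  have hεμ : εbar = 1 - μ := by
    rw [hε]
    exact le_antisymm (csInf_le ⟨1 - μ, hlb⟩ hmem) (le_csInf ⟨_, hmem⟩ hlb)
  constructor
  · intro γ hγ
    set A := ∑ v, ∑ y, (if P v y ≤ γ * Qstar y then P v y else 0) with hA
    have hA0 : 0 ≤ A :=
      Finset.sum_nonneg fun v _ => Finset.sum_nonneg fun y _ => by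
        split_ifs with h
        · exact hP0 v y
        · exact le_rfl
    have hA1 : A ≤ 1 := by
      rw [hA, ← hP1]
      refine Finset.sum_le_sum fun v _ => Finset.sum_le_sum fun y _ => ?_
      split_ifs with h
      · exact le_rfl
      · exact hP0 v y
    rw [hεμ]
    by_cases hcase : γ < μ
    · -- in this case the argmax always escapes the indicator set
      have key : ∀ y : Y, (⨆ v, P v y) + ∑ v, (if P v y ≤ γ * Qstar y then P v y else 0)
          ≤ ∑ v, P v y := by
        intro y
        obtain ⟨v0, hv0eq, hv0max⟩ := hattain y
        have hsum : ∑ v, (if P v y ≤ γ * Qstar y then P v y else 0)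
            ≤ ∑ v, (P v y - if v = v0 then P v y else 0) := by
          refine Finset.sum_le_sum fun v _ => ?_
          by_cases hv : v = v0
          · subst hv
            rw [if_pos rfl]
            split_ifs with h
            · -- P v0 y ≤ γ * Qstar y forces P v0 y ≤ 0
              have hq : Qstar y = P v y / μ := by rw [hQstar, hv0eq]
              rw [hq, ← mul_div_assoc] at h
              have h2 : P v y * μ ≤ γ * P v y := (le_div_iff₀ hμpos).mp h
              nlinarith [hP0 v y]
            · linarith [hP0 v y]
          · rw [if_neg hv]
            split_ifs with h
            · linarith
            · linarith [hP0 v y]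
        have hrhs : ∑ v, (P v y - if v = v0 then P v y else 0)
            = ∑ v, P v y - ⨆ v, P v y := by
          rw [Finset.sum_sub_distrib, Finset.sum_ite_eq' Finset.univ v0 (fun v => P v y),
            if_pos (Finset.mem_univ _), hv0eq]
        linarith [hsum.trans_eq hrhs]
      have hμA : μ + ∑ y, ∑ v, (if P v y ≤ γ * Qstar y then P v y else 0) ≤ 1 := by
        rw [hμ, ← hsum1', ← Finset.sum_add_distrib]
        exact Finset.sum_le_sum fun y _ => key y
      have hAcomm : A = ∑ y, ∑ v, (if P v y ≤ γ * Qstar y then P v y else 0) :=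
        Finset.sum_comm
      have hAle : A ≤ 1 - μ := by rw [hAcomm]; linarith
      calc (1 - γ) * A ≤ 1 * A := mul_le_mul_of_nonneg_right (by linarith) hA0
        _ = A := one_mul A
        _ ≤ 1 - μ := hAle
    · push_neg at hcase
      by_cases hγ1 : γ ≤ 1
      · calc (1 - γ) * A ≤ (1 - γ) * 1 :=
              mul_le_mul_of_nonneg_left hA1 (by linarith)
          _ = 1 - γ := mul_one _
          _ ≤ 1 - μ := by linarith
      · have : (1 - γ) * A ≤ 0 := mul_nonpos_of_nonpos_of_nonneg (by linarith) hA0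
        linarith
  · have hall : ∀ v y, P v y ≤ μ * Qstar y := by
      intro v y
      have hq : μ * Qstar y = ⨆ v', P v' y := by
        rw [hQstar]; field_simp
      rw [hq]; exact hle v y
    have hone : (∑ v, ∑ y, if P v y ≤ μ * Qstar y then P v y else 0) = 1 := by
      rw [← hP1]
      exact Finset.sum_congr rfl fun v _ =>
        Finset.sum_congr rfl fun y _ => if_pos (hall v y)
    rw [hone, hεμ, mul_one]
end

section
/- Lower bound from a bank of binary tests: for any distribution Q_Y on 𝒴, ε̄ = max_{Q_Y} Σ_v P_V(v) α_{Q*_{V̂}(v)}( P_{Y|V=v}, Q_Y ), where Q*_{V̂}(v) = Σ_y Q_Y(y) P^{MAP}_{V̂|Y}(v|y); in particular the right-hand side with any fixed Q_Y is a lower bound on ε̄. -/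
/-!
The MAP test is optimal, so `ε̄ = 1 - ∑_y max_v P_{VY}(v, y)`. For every `Q_Y`, the column
`y ↦ P^{MAP}(v|y)` is a binary test of type-1 error exactly `Q*_{V̂}(v)`, so the bank of
binary tests never exceeds the error of the MAP test. For `Q_Y(y) ∝ max_v P_{VY}(v, y)` every
`P_{Y|V=v}` is dominated by a multiple of `Q_Y`, which bounds each `α` from below linearly in
`Q*_{V̂}(v)`; these bounds add up to `ε̄` because `∑_v Q*_{V̂}(v) = 1`.
-/

open scoped Classical
open Finset

section BinaryTradeoff

variable {Y : Type*} [Fintype Y]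

noncomputable def binaryTradeoff (β : ℝ) (P Q : Y → ℝ) : ℝ :=
  sInf {e : ℝ | ∃ T : Y → ℝ, (∀ y, 0 ≤ T y ∧ T y ≤ 1) ∧
    (∑ y, Q y * T y) ≤ β ∧ e = ∑ y, P y * (1 - T y)}

lemma binaryTradeoff_le {β : ℝ} {P Q T : Y → ℝ} (hP : ∀ y, 0 ≤ P y)
    (hT : ∀ y, 0 ≤ T y ∧ T y ≤ 1) (hTβ : ∑ y, Q y * T y ≤ β) :
    binaryTradeoff β P Q ≤ ∑ y, P y * (1 - T y) := by
  refine csInf_le ⟨0, ?_⟩ ⟨T, hT, hTβ, rfl⟩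
  rintro e ⟨T', hT', -, rfl⟩
  exact sum_nonneg fun y _ => mul_nonneg (hP y) (by linarith [(hT' y).2])

/-- If `P ≤ c • Q`, a test with `Q`-mass at most `β` has `P`-mass at most `c β`. -/
lemma one_sub_mul_le_binaryTradeoff {β c : ℝ} {P Q : Y → ℝ} (hβ : 0 ≤ β) (hc : 0 ≤ c)
    (hP1 : ∑ y, P y = 1) (hPQ : ∀ y, P y ≤ c * Q y) :
    1 - c * β ≤ binaryTradeoff β P Q := by
  refine le_csInf ⟨∑ y, P y * (1 - 0), 0, fun _ => ⟨le_rfl, zero_le_one⟩, by simpa, rfl⟩ ?_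
  rintro e ⟨T, hT, hTβ, rfl⟩
  have hPT : ∑ y, P y * T y ≤ c * ∑ y, Q y * T y := by
    rw [mul_sum]
    exact sum_le_sum fun y _ => by
      rw [← mul_assoc]; exact mul_le_mul_of_nonneg_right (hPQ y) (hT y).1
  have hsplit : ∑ y, P y * (1 - T y) = 1 - ∑ y, P y * T y := by
    simp only [mul_one_sub, sum_sub_distrib, hP1]
  nlinarith [mul_le_mul_of_nonneg_left hTβ hc]

end BinaryTradeoff

section MAPTest

variable {V Y : Type*} [Fintype V] (J : V → Y → ℝ)

noncomputable def bayesError [Fintype Y] : ℝ :=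
  sInf {e : ℝ | ∃ T : Y → V → ℝ, (∀ y v, 0 ≤ T y v) ∧ (∀ y, ∑ v, T y v = 1) ∧
    e = 1 - ∑ v, ∑ y, J v y * T y v}

noncomputable def mapTest (y : Y) (v : V) : ℝ :=
  if J v y = ⨆ v', J v' y then
    ((univ.filter (fun v' : V => J v' y = ⨆ v'', J v'' y)).card : ℝ)⁻¹
  else 0

lemma le_ciSup_fintype (v : V) (y : Y) : J v y ≤ ⨆ v', J v' y :=
  le_ciSup (f := fun v' => J v' y) (Set.finite_range _).bddAbove v

lemma mapTest_nonneg (y : Y) (v : V) : 0 ≤ mapTest J y v := by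
  unfold mapTest; split_ifs <;> positivity

lemma sum_mapTest [Nonempty V] (y : Y) : ∑ v, mapTest J y v = 1 := by
  obtain ⟨v₀, hv₀⟩ := exists_eq_ciSup_of_finite (f := fun v => J v y)
  have hcard : ((univ.filter (fun v' : V => J v' y = ⨆ v'', J v'' y)).card : ℝ) ≠ 0 :=
    Nat.cast_ne_zero.mpr (card_pos.mpr ⟨v₀, mem_filter.mpr ⟨mem_univ _, hv₀⟩⟩).ne'
  unfold mapTest
  rw [← sum_filter, sum_const, nsmul_eq_mul, mul_inv_cancel₀ hcard]

lemma sum_mul_mapTest [Nonempty V] (y : Y) : ∑ v, J v y * mapTest J y v = ⨆ v, J v y := by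
  have hpt : ∀ v, J v y * mapTest J y v = (⨆ v, J v y) * mapTest J y v := by
    intro v
    unfold mapTest
    split_ifs with h
    · rw [h]
    · simp
  simp only [hpt, ← mul_sum, sum_mapTest, mul_one]

lemma sum_mul_le_iSup {T : Y → V → ℝ} (hT0 : ∀ y v, 0 ≤ T y v) (hT1 : ∀ y, ∑ v, T y v = 1)
    (y : Y) : ∑ v, J v y * T y v ≤ ⨆ v, J v y :=
  calc ∑ v, J v y * T y v ≤ ∑ v, (⨆ v, J v y) * T y v :=
        sum_le_sum fun v _ => mul_le_mul_of_nonneg_right (le_ciSup_fintype J v y) (hT0 y v)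
    _ = ⨆ v, J v y := by rw [← mul_sum, hT1, mul_one]

lemma bayesError_eq [Fintype Y] [Nonempty V] : bayesError J = 1 - ∑ y, ⨆ v, J v y := by
  refine IsLeast.csInf_eq ⟨⟨mapTest J, mapTest_nonneg J, sum_mapTest J, ?_⟩, ?_⟩
  · rw [sum_comm]; simp only [sum_mul_mapTest]
  · rintro e ⟨T, hT0, hT1, rfl⟩
    rw [sum_comm]
    linarith [sum_le_sum fun y (_ : y ∈ univ) => sum_mul_le_iSup J hT0 hT1 y]

end MAPTest

section BankOfTests

variable {V Y : Type*} [Fintype V] [Fintype Y] {PV : V → ℝ} {W : V → Y → ℝ}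

lemma sum_mul_sum_mul_one_sub (hPV1 : ∑ v, PV v = 1) (hW1 : ∀ v, ∑ y, W v y = 1)
    (T : Y → V → ℝ) :
    ∑ v, PV v * ∑ y, W v y * (1 - T y v) = 1 - ∑ v, ∑ y, PV v * W v y * T y v := by
  simp only [sum_sub_distrib, hW1, mul_sub, mul_one, hPV1, mul_sum, mul_assoc]

/-- Each column `T · v` of a test for `V` is a binary test of type-1 error `∑_y Q y * T y v`. -/
lemma sum_mul_binaryTradeoff_le (hPV0 : ∀ v, 0 ≤ PV v) (hPV1 : ∑ v, PV v = 1)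
    (hW0 : ∀ v y, 0 ≤ W v y) (hW1 : ∀ v, ∑ y, W v y = 1) (Q : Y → ℝ) {T : Y → V → ℝ}
    (hT0 : ∀ y v, 0 ≤ T y v) (hT1 : ∀ y, ∑ v, T y v = 1) :
    ∑ v, PV v * binaryTradeoff (∑ y, Q y * T y v) (W v) Q ≤
      1 - ∑ v, ∑ y, PV v * W v y * T y v := by
  have hT : ∀ y v, 0 ≤ T y v ∧ T y v ≤ 1 := fun y v =>
    ⟨hT0 y v, (single_le_sum (fun v _ => hT0 y v) (mem_univ v)).trans_eq (hT1 y)⟩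
  rw [← sum_mul_sum_mul_one_sub hPV1 hW1]
  exact sum_le_sum fun v _ => mul_le_mul_of_nonneg_left
    (binaryTradeoff_le (hW0 v) (fun y => hT y v) le_rfl) (hPV0 v)

/-- Domination of the joint distribution by `S • Q` gives `P_{Y|V=v} ≤ (S / P_V(v)) • Q`. -/
lemma one_sub_le_sum_mul_binaryTradeoff (hPVpos : ∀ v, 0 < PV v) (hPV1 : ∑ v, PV v = 1)
    (hW1 : ∀ v, ∑ y, W v y = 1) {Q : Y → ℝ} (hQ0 : ∀ y, 0 ≤ Q y) (hQ1 : ∑ y, Q y = 1)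
    {S : ℝ} (hS : 0 ≤ S) (hdom : ∀ v y, PV v * W v y ≤ S * Q y) {T : Y → V → ℝ}
    (hT0 : ∀ y v, 0 ≤ T y v) (hT1 : ∀ y, ∑ v, T y v = 1) :
    1 - S ≤ ∑ v, PV v * binaryTradeoff (∑ y, Q y * T y v) (W v) Q := by
  have hcol : ∀ v, PV v - S * ∑ y, Q y * T y v ≤
      PV v * binaryTradeoff (∑ y, Q y * T y v) (W v) Q := by
    intro v
    have hPV := hPVpos v
    have hWQ : ∀ y, W v y ≤ S / PV v * Q y := fun y => by
      rw [div_mul_eq_mul_div, le_div_iff₀ hPV, mul_comm]; exact hdom v y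
    have := mul_le_mul_of_nonneg_left (one_sub_mul_le_binaryTradeoff (β := ∑ y, Q y * T y v)
      (sum_nonneg fun y _ => mul_nonneg (hQ0 y) (hT0 y v)) (by positivity) (hW1 v) hWQ) hPV.le
    rwa [mul_one_sub, ← mul_assoc, mul_div_cancel₀ _ hPV.ne'] at this
  have hβ : ∑ v, ∑ y, Q y * T y v = 1 := by
    rw [sum_comm]; simp only [← mul_sum, hT1, mul_one, hQ1]
  calc 1 - S = ∑ v, (PV v - S * ∑ y, Q y * T y v) := by
        rw [sum_sub_distrib, ← mul_sum, hβ, hPV1, mul_one]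
    _ ≤ _ := sum_le_sum fun v _ => hcol v

end BankOfTests

/-- Bank-of-binary-tests expression: `ε̄` is the maximum over output
distributions `Q_Y` of `∑_v P_V(v) α_{Q*_{V̂}(v)}(P_{Y|V=v}, Q_Y)`, where
`Q*_{V̂}(v) = ∑_y Q_Y(y) P^{MAP}(v|y)`. -/
theorem stmt_10 {V Y : Type*} [Fintype V] [Fintype Y] [Nonempty V]
    (PV : V → ℝ) (hPVpos : ∀ v, 0 < PV v) (hPV1 : ∑ v, PV v = 1)
    (W : V → Y → ℝ) (hW0 : ∀ v y, 0 ≤ W v y) (hW1 : ∀ v, ∑ y, W v y = 1)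
    -- the MAP test for the joint distribution `P_{VY}(v,y) = PV v * W v y`
    (PMAP : Y → V → ℝ)
    (hPMAP : ∀ y v, PMAP y v =
      if PV v * W v y = (⨆ v', PV v' * W v' y) then
        ((univ.filter (fun v' : V =>
            PV v' * W v' y = (⨆ v'', PV v'' * W v'' y))).card : ℝ)⁻¹
      else 0)
    (εbar : ℝ)
    (hε : εbar = sInf {e : ℝ | ∃ T : Y → V → ℝ,
        (∀ y v, 0 ≤ T y v) ∧ (∀ y, ∑ v, T y v = 1) ∧
        e = 1 - ∑ v, ∑ y, (PV v * W v y) * T y v})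
    -- `alpha β Pv QY` is the binary trade-off α_β(P_{Y|V=v}, Q_Y) on 𝒴
    (alpha : ℝ → (Y → ℝ) → (Y → ℝ) → ℝ)
    (halpha : ∀ β Pv QY, alpha β Pv QY =
      sInf {e : ℝ | ∃ T : Y → ℝ, (∀ y, 0 ≤ T y ∧ T y ≤ 1) ∧
        (∑ y, QY y * T y) ≤ β ∧ e = ∑ y, Pv y * (1 - T y)}) :
    IsGreatest {x : ℝ | ∃ QY : Y → ℝ, (∀ y, 0 ≤ QY y) ∧ (∑ y, QY y = 1) ∧
        x = ∑ v, PV v * alpha (∑ y, QY y * PMAP y v) (W v) QY} εbar := by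
  set J : V → Y → ℝ := fun v y => PV v * W v y
  obtain rfl : PMAP = mapTest J := funext₂ hPMAP
  obtain rfl : alpha = binaryTradeoff := funext₃ halpha
  set S := ∑ y, ⨆ v, J v y
  have hεS : εbar = 1 - S := hε.trans (bayesError_eq J)
  have hMAP : ∑ v, ∑ y, J v y * mapTest J y v = S := by
    rw [sum_comm]; simp only [sum_mul_mapTest, S]
  obtain ⟨v₀⟩ := ‹Nonempty V›
  have hS : 0 < S := by
    have := sum_le_sum fun y (_ : y ∈ univ) => le_ciSup_fintype J v₀ y
    simp only [J, ← mul_sum, hW1, mul_one] at this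
    linarith [hPVpos v₀]
  have hupper : ∀ Q : Y → ℝ, (∀ y, 0 ≤ Q y) →
      ∑ v, PV v * binaryTradeoff (∑ y, Q y * mapTest J y v) (W v) Q ≤ εbar := fun Q _ =>
    (sum_mul_binaryTradeoff_le (fun v => (hPVpos v).le) hPV1 hW0 hW1 Q (mapTest_nonneg J)
      (sum_mapTest J)).trans_eq (by rw [hεS, hMAP])
  set Q : Y → ℝ := fun y => (⨆ v, J v y) / S
  have hQ0 : ∀ y, 0 ≤ Q y := fun y => div_nonneg
    ((mul_nonneg (hPVpos v₀).le (hW0 v₀ y)).trans (le_ciSup_fintype J v₀ y)) hS.le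
  have hQ1 : ∑ y, Q y = 1 := by rw [← sum_div, div_self hS.ne']
  have hdom : ∀ v y, J v y ≤ S * Q y := fun v y => by
    rw [mul_div_cancel₀ _ hS.ne']; exact le_ciSup_fintype J v y
  refine ⟨⟨Q, hQ0, hQ1, le_antisymm ?_ (hupper Q hQ0)⟩, ?_⟩
  · exact hεS ▸ one_sub_le_sum_mul_binaryTradeoff hPVpos hPV1 hW1 hQ0 hQ1 hS.le hdom
      (mapTest_nonneg J) (sum_mapTest J)
  · rintro x ⟨Q', hQ'0, -, rfl⟩
    exact hupper Q' hQ'0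
end

section
/- Wolfowitz-type bound: ε̄ ≥ max_{Q_Y} sup_{γ ≥ 0} inf_v { Pr[ P_{Y|V}(Y|v) P_V(v) ≤ γ Q_Y(Y) ] − γ }, where the inner probability is computed with Y ~ P_{Y|V=v}. -/
open scoped Classical
open Finset

/-- Wolfowitz-type strong converse:
`ε̄ ≥ max_{Q_Y} sup_{γ≥0} inf_v { Pr_{Y∼P_{Y|V=v}}[P_{Y|V}(Y|v)P_V(v) ≤ γ Q_Y(Y)] − γ }`. -/
theorem stmt_11 {V Y : Type*} [Fintype V] [Fintype Y] [Nonempty V]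
    (PV : V → ℝ) (hPV0 : ∀ v, 0 ≤ PV v) (hPV1 : ∑ v, PV v = 1)
    (W : V → Y → ℝ) (hW0 : ∀ v y, 0 ≤ W v y) (hW1 : ∀ v, ∑ y, W v y = 1)
    (εbar : ℝ)
    (hε : εbar = sInf {e : ℝ | ∃ T : Y → V → ℝ,
        (∀ y v, 0 ≤ T y v) ∧ (∀ y, ∑ v, T y v = 1) ∧
        e = 1 - ∑ v, ∑ y, (PV v * W v y) * T y v}) :
    ∀ QY : Y → ℝ, (∀ y, 0 ≤ QY y) → (∑ y, QY y = 1) →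
      ∀ γ : ℝ, 0 ≤ γ →
        (⨅ v, (∑ y, if PV v * W v y ≤ γ * QY y then W v y else 0) - γ) ≤ εbar := by
  intro QY hQ0 hQ1 γ hγ
  set α : V → ℝ := fun v => ∑ y, if PV v * W v y ≤ γ * QY y then W v y else 0 with hα
  rw [hε]
  apply le_csInf
  · refine ⟨1 - ∑ v, ∑ y, (PV v * W v y) * ((Fintype.card V : ℝ)⁻¹),
      fun _ _ => (Fintype.card V : ℝ)⁻¹, ?_, ?_, rfl⟩
    · intro y v; positivity
    · intro y
      rw [Finset.sum_const, nsmul_eq_mul, Finset.card_univ, mul_inv_cancel₀]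
      exact Nat.cast_ne_zero.mpr Fintype.card_ne_zero
  · rintro e ⟨T, hT0, hT1, rfl⟩
    -- T ≤ 1
    have hT1' : ∀ y v, T y v ≤ 1 := by
      intro y v
      calc T y v ≤ ∑ v, T y v :=
        Finset.single_le_sum (fun w _ => hT0 y w) (Finset.mem_univ v)
      _ = 1 := hT1 y
    -- minimizer of α
    obtain ⟨v₀, -, hv₀⟩ := Finset.exists_min_image Finset.univ α ⟨Classical.arbitrary V,
      Finset.mem_univ _⟩
    have hle : (⨅ v, α v - γ) ≤ α v₀ - γ :=
      ciInf_le (Finite.bddBelow_range _) v₀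
    refine hle.trans ?_
    -- bound the correct-decoding probability
    have hbound : ∑ v, ∑ y, (PV v * W v y) * T y v ≤ (1 - α v₀) + γ := by
      have step1 : ∑ v, ∑ y, (PV v * W v y) * T y v ≤
          ∑ v, ∑ y, ((if PV v * W v y ≤ γ * QY y then 0 else PV v * W v y)
            + (if PV v * W v y ≤ γ * QY y then γ * QY y * T y v else 0)) := by
        refine Finset.sum_le_sum fun v _ => Finset.sum_le_sum fun y _ => ?_
        split_ifs with h
        · simpa using mul_le_mul_of_nonneg_right h (hT0 y v)
        · have := mul_le_mul_of_nonneg_left (hT1' y v)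
            (mul_nonneg (hPV0 v) (hW0 v y))
          simpa using this
      refine step1.trans ?_
      have split : ∑ v, ∑ y, ((if PV v * W v y ≤ γ * QY y then 0 else PV v * W v y)
            + (if PV v * W v y ≤ γ * QY y then γ * QY y * T y v else 0))
          = (∑ v, ∑ y, (if PV v * W v y ≤ γ * QY y then 0 else PV v * W v y))
            + ∑ v, ∑ y, (if PV v * W v y ≤ γ * QY y then γ * QY y * T y v else 0) := by
        rw [← Finset.sum_add_distrib]
        exact Finset.sum_congr rfl fun v _ => by rw [← Finset.sum_add_distrib]
      rw [split]
      have hA : ∑ v, ∑ y, (if PV v * W v y ≤ γ * QY y then 0 else PV v * W v y)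
          ≤ 1 - α v₀ := by
        have hcongr : ∀ v : V, ∑ y, (if PV v * W v y ≤ γ * QY y then 0 else PV v * W v y)
            = PV v * (1 - α v) := by
          intro v
          have : ∑ y, (if PV v * W v y ≤ γ * QY y then 0 else PV v * W v y)
              = (∑ y, PV v * W v y) - ∑ y, (if PV v * W v y ≤ γ * QY y then PV v * W v y else 0) := by
            rw [← Finset.sum_sub_distrib]
            exact Finset.sum_congr rfl fun y _ => by split_ifs <;> ring
          rw [this, ← Finset.mul_sum, hW1 v, mul_one, hα]
          have : ∑ y, (if PV v * W v y ≤ γ * QY y then PV v * W v y else 0)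
              = PV v * ∑ y, (if PV v * W v y ≤ γ * QY y then W v y else 0) := by
            rw [Finset.mul_sum]
            exact Finset.sum_congr rfl fun y _ => by split_ifs <;> ring
          rw [this]; ring
        calc ∑ v, ∑ y, (if PV v * W v y ≤ γ * QY y then 0 else PV v * W v y)
            = ∑ v, PV v * (1 - α v) := Finset.sum_congr rfl fun v _ => hcongr v
          _ ≤ ∑ v, PV v * (1 - α v₀) := by
              refine Finset.sum_le_sum fun v _ => ?_
              exact mul_le_mul_of_nonneg_left (by linarith [hv₀ v (Finset.mem_univ v)])
                (hPV0 v)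
          _ = 1 - α v₀ := by rw [← Finset.sum_mul, hPV1, one_mul]
      have hB : ∑ v, ∑ y, (if PV v * W v y ≤ γ * QY y then γ * QY y * T y v else 0)
          ≤ γ := by
        have hstep : ∑ v, ∑ y, (if PV v * W v y ≤ γ * QY y then γ * QY y * T y v else 0)
            ≤ ∑ v, ∑ y, γ * QY y * T y v := by
          refine Finset.sum_le_sum fun v _ => Finset.sum_le_sum fun y _ => ?_
          split_ifs
          · exact le_refl _
          · exact mul_nonneg (mul_nonneg hγ (hQ0 y)) (hT0 y v)
        refine hstep.trans ?_
        rw [Finset.sum_comm]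
        have heq : ∑ y, ∑ v, γ * QY y * T y v = γ := by
          have h1 : ∀ y : Y, ∑ v, γ * QY y * T y v = γ * QY y := fun y => by
            rw [← Finset.mul_sum, hT1 y, mul_one]
          rw [Finset.sum_congr rfl fun y _ => h1 y, ← Finset.mul_sum, hQ1, mul_one]
        exact heq.le
      linarith
    linarith
end

section
/- Verdú–Han-type bound: for any distribution Q_Y on 𝒴 and any γ ≥ 0, ε̄ ≥ Pr[ P_{VY}(V,Y) ≤ γ Q_Y(Y) ] − γ, where the probability is under P_{VY}. -/
open scoped Classical
open Finset

/-- Verdú–Han-type bound: for any output distribution `Q_Y` and any `γ ≥ 0`,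
`ε̄ ≥ Pr[P_{VY}(V,Y) ≤ γ Q_Y(Y)] − γ`. -/
theorem stmt_12 {V Y : Type*} [Fintype V] [Fintype Y]
    (P : V → Y → ℝ) (hP0 : ∀ v y, 0 ≤ P v y) (hP1 : ∑ v, ∑ y, P v y = 1)
    (εbar : ℝ)
    (hε : εbar = sInf {e : ℝ | ∃ T : Y → V → ℝ,
        (∀ y v, 0 ≤ T y v) ∧ (∀ y, ∑ v, T y v = 1) ∧
        e = 1 - ∑ v, ∑ y, P v y * T y v})
    (QY : Y → ℝ) (hQY0 : ∀ y, 0 ≤ QY y) (hQY1 : ∑ y, QY y = 1)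
    (γ : ℝ) (hγ : 0 ≤ γ) :
    εbar ≥ (∑ v, ∑ y, if P v y ≤ γ * QY y then P v y else 0) - γ := by
  subst hε
  have hne : Nonempty V := by
    by_contra h
    rw [not_nonempty_iff] at h
    simp [Finset.univ_eq_empty] at hP1
  obtain ⟨v0⟩ := hne
  apply le_csInf
  · refine ⟨1 - ∑ v, ∑ y, P v y * (if v = v0 then (1:ℝ) else 0),
      fun y v => if v = v0 then (1:ℝ) else 0, ?_, ?_, rfl⟩
    · intro y v; dsimp only; split <;> norm_num
    · intro y; simp [Finset.sum_ite_eq]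
  · rintro e ⟨T, hT0, hT1, rfl⟩
    have key : ∑ v, ∑ y, P v y * T y v ≤
        γ + ∑ v, ∑ y, (if P v y ≤ γ * QY y then 0 else P v y) := by
      have step1 : ∑ v, ∑ y, P v y * T y v ≤
          ∑ v, ∑ y, (γ * QY y * T y v + (if P v y ≤ γ * QY y then 0 else P v y)) := by
        refine Finset.sum_le_sum fun v _ => Finset.sum_le_sum fun y _ => ?_
        by_cases h : P v y ≤ γ * QY y
        · simp only [h, if_true, add_zero]
          exact mul_le_mul_of_nonneg_right h (hT0 y v)
        · simp only [h, if_false]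
          have h1 : P v y * T y v ≤ P v y := by
            nlinarith [hT0 y v, hP0 v y,
              Finset.single_le_sum (fun i _ => hT0 y i) (Finset.mem_univ v), hT1 y]
          have h2 : 0 ≤ γ * QY y * T y v :=
            mul_nonneg (mul_nonneg hγ (hQY0 y)) (hT0 y v)
          linarith
      have step2 : ∑ v, ∑ y, γ * QY y * T y v = γ := by
        rw [Finset.sum_comm]
        have : ∀ y, ∑ v, γ * QY y * T y v = γ * QY y := by
          intro y; rw [← Finset.mul_sum, hT1 y, mul_one]
        simp_rw [this, ← Finset.mul_sum, hQY1, mul_one]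
      calc ∑ v, ∑ y, P v y * T y v
          ≤ ∑ v, ∑ y, (γ * QY y * T y v + (if P v y ≤ γ * QY y then 0 else P v y)) := step1
        _ = γ + ∑ v, ∑ y, (if P v y ≤ γ * QY y then 0 else P v y) := by
            simp_rw [Finset.sum_add_distrib]; rw [step2]
    have split : (∑ v, ∑ y, if P v y ≤ γ * QY y then P v y else 0)
        + (∑ v, ∑ y, if P v y ≤ γ * QY y then 0 else P v y) = 1 := by
      rw [← hP1, ← Finset.sum_add_distrib]
      refine Finset.sum_congr rfl fun v _ => ?_
      rw [← Finset.sum_add_distrib]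
      refine Finset.sum_congr rfl fun y _ => ?_
      split <;> ring
    linarith
end

section
/- Meta-converse for channel coding: for a code with M codewords inducing input distribution P_X^C over channel P_{Y|X}, and any output distribution Q_Y, the minimum decoding error probability ε̄(C) satisfies ε̄(C) ≥ α_{1/M}( P_X^C × P_{Y|X}, P_X^C × Q_Y ). -/
open scoped Classical
open Finset

/-- Meta-converse for channel coding: for a code `enc` with `M` equiprobable
messages inducing input distribution `P_X^C`, and any output distribution `Q_Y`,
the minimum decoding error probability satisfies
`ε̄(C) ≥ α_{1/M}(P_X^C × P_{Y|X}, P_X^C × Q_Y)`. -/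
theorem stmt_13 {X Y : Type*} [Fintype X] [Fintype Y]
    (M : ℕ) (hM : 0 < M) (enc : Fin M → X)
    (W : X → Y → ℝ) (hW0 : ∀ x y, 0 ≤ W x y) (hW1 : ∀ x, ∑ y, W x y = 1)
    (PXC : X → ℝ)
    (hPXC : ∀ x, PXC x = ((univ.filter (fun v : Fin M => enc v = x)).card : ℝ) / M)
    (QY : Y → ℝ) (hQY0 : ∀ y, 0 ≤ QY y) (hQY1 : ∑ y, QY y = 1)
    (εbarC : ℝ)
    (hε : εbarC = sInf {e : ℝ | ∃ D : Y → Fin M → ℝ,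
        (∀ y v, 0 ≤ D y v) ∧ (∀ y, ∑ v, D y v = 1) ∧
        e = 1 - ∑ v, ∑ y, ((M : ℝ)⁻¹ * W (enc v) y) * D y v}) :
    εbarC ≥ sInf {e : ℝ | ∃ T : X → Y → ℝ,
        (∀ x y, 0 ≤ T x y ∧ T x y ≤ 1) ∧
        (∑ x, ∑ y, (PXC x * QY y) * T x y) ≤ (M : ℝ)⁻¹ ∧
        e = ∑ x, ∑ y, (PXC x * W x y) * (1 - T x y)} := by
  have hMne : (M : ℝ) ≠ 0 := Nat.cast_ne_zero.mpr hM.ne'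
  have hfib : ∀ f : Fin M → ℝ,
      ∑ x : X, ∑ v ∈ univ.filter (fun v : Fin M => enc v = x), f v = ∑ v, f v :=
    fun f => Finset.sum_fiberwise univ enc f
  have hPXC0 : ∀ x, 0 ≤ PXC x := by
    intro x; rw [hPXC]; positivity
  have hPsum : ∑ x, PXC x = 1 := by
    have h1 : ∑ x : X, ((univ.filter (fun v : Fin M => enc v = x)).card : ℝ) = M := by
      have := hfib (fun _ => (1 : ℝ))
      simpa using this
    simp only [hPXC]
    rw [← Finset.sum_div, h1, div_self hMne]
  rw [hε]
  apply le_csInf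
  · -- nonempty: uniform decoder
    refine ⟨1 - ∑ v : Fin M, ∑ y, ((M : ℝ)⁻¹ * W (enc v) y) * (M : ℝ)⁻¹,
      fun _ _ => (M : ℝ)⁻¹, fun _ _ => by positivity, fun y => ?_, rfl⟩
    simp [Finset.card_univ, mul_inv_cancel₀ hMne]
  · rintro e ⟨D, hD0, hD1, he⟩
    set N : X → ℕ := fun x => (univ.filter (fun v : Fin M => enc v = x)).card with hN
    set S : X → Y → ℝ := fun x y => ∑ v ∈ univ.filter (fun v : Fin M => enc v = x), D y v
      with hSdef
    have hS0 : ∀ x y, 0 ≤ S x y := fun x y => Finset.sum_nonneg fun v _ => hD0 y v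
    have hSsum : ∀ y, ∑ x, S x y = 1 := fun y => by
      rw [hSdef]; rw [hfib (D y), hD1 y]
    have hSzero : ∀ x y, N x = 0 → S x y = 0 := by
      intro x y h
      have hemp : univ.filter (fun v : Fin M => enc v = x) = ∅ := Finset.card_eq_zero.mp h
      simp [hSdef, hemp]
    set T : X → Y → ℝ := fun x y => ((N x : ℝ))⁻¹ * S x y with hTdef
    have key : ∀ x y, PXC x * T x y = (M : ℝ)⁻¹ * S x y := by
      intro x y
      rcases Nat.eq_zero_or_pos (N x) with h | h
      · rw [hTdef]; simp [hSzero x y h]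
      · have hne : (N x : ℝ) ≠ 0 := Nat.cast_ne_zero.mpr h.ne'
        rw [hPXC, hTdef]
        field_simp
        ring
    apply csInf_le
    · -- bddBelow by 0
      refine ⟨0, ?_⟩
      rintro e' ⟨T', hT01, _, rfl⟩
      apply Finset.sum_nonneg; intro x _
      apply Finset.sum_nonneg; intro y _
      have := hT01 x y
      have h1 : 0 ≤ 1 - T' x y := by linarith [this.2]
      exact mul_nonneg (mul_nonneg (hPXC0 x) (hW0 x y)) h1
    · refine ⟨T, ?_, ?_, ?_⟩
      · -- bounds on T
        intro x y
        constructor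
        · exact mul_nonneg (by positivity) (hS0 x y)
        · rcases Nat.eq_zero_or_pos (N x) with h | h
          · rw [hTdef]; simp [hSzero x y h]
          · have hne : (N x : ℝ) ≠ 0 := Nat.cast_ne_zero.mpr h.ne'
            have hSle : S x y ≤ (N x : ℝ) := by
              rw [hSdef]
              calc ∑ v ∈ univ.filter (fun v : Fin M => enc v = x), D y v
                  ≤ ∑ _v ∈ univ.filter (fun v : Fin M => enc v = x), (1 : ℝ) := by
                    apply Finset.sum_le_sum
                    intro v _
                    have := Finset.single_le_sum (fun i _ => hD0 y i) (Finset.mem_univ v)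
                    rw [hD1 y] at this
                    exact this
                _ = (N x : ℝ) := by simp [hN]
            rw [hTdef]
            calc ((N x : ℝ))⁻¹ * S x y ≤ ((N x : ℝ))⁻¹ * (N x : ℝ) :=
                  mul_le_mul_of_nonneg_left hSle (by positivity)
              _ = 1 := inv_mul_cancel₀ hne
      · -- type-1 constraint
        have hpt : ∀ x y, (PXC x * QY y) * T x y = QY y * ((M : ℝ)⁻¹ * S x y) := by
          intro x y
          rw [← key x y]; ring
        have : ∑ x, ∑ y, (PXC x * QY y) * T x y = (M : ℝ)⁻¹ := by
          simp_rw [hpt]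
          rw [Finset.sum_comm]
          have h2 : ∀ y, ∑ x, QY y * ((M : ℝ)⁻¹ * S x y) = QY y * (M : ℝ)⁻¹ := by
            intro y
            rw [← Finset.mul_sum]
            congr 1
            rw [← Finset.mul_sum, hSsum y, mul_one]
          simp_rw [h2]
          rw [← Finset.sum_mul, hQY1, one_mul]
        exact le_of_eq this
      · -- error equality
        have e2 : ∀ y, ∑ x, (PXC x * W x y) * T x y
            = ∑ v, ((M : ℝ)⁻¹ * W (enc v) y) * D y v := by
          intro y
          have hx : ∀ x, (PXC x * W x y) * T x y
              = ∑ v ∈ univ.filter (fun v : Fin M => enc v = x),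
                  ((M : ℝ)⁻¹ * W (enc v) y) * D y v := by
            intro x
            have h3 : (PXC x * W x y) * T x y = W x y * ((M : ℝ)⁻¹ * S x y) := by
              rw [← key x y]; ring
            rw [h3, hSdef]
            simp only []
            rw [Finset.mul_sum, Finset.mul_sum]
            apply Finset.sum_congr rfl
            intro v hv
            rw [Finset.mem_filter] at hv
            rw [hv.2]
            ring
          calc ∑ x, (PXC x * W x y) * T x y
              = ∑ x : X, ∑ v ∈ univ.filter (fun v : Fin M => enc v = x),
                  ((M : ℝ)⁻¹ * W (enc v) y) * D y v := Finset.sum_congr rfl fun x _ => hx x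
            _ = ∑ v, ((M : ℝ)⁻¹ * W (enc v) y) * D y v := hfib _
        have e1 : ∑ x, ∑ y, PXC x * W x y = 1 := by
          have : ∀ x, ∑ y, PXC x * W x y = PXC x := by
            intro x
            rw [← Finset.mul_sum, hW1 x, mul_one]
          simp_rw [this]
          exact hPsum
        have herr : ∑ x, ∑ y, (PXC x * W x y) * (1 - T x y)
            = 1 - ∑ v, ∑ y, ((M : ℝ)⁻¹ * W (enc v) y) * D y v := by
          have hsplit : ∀ x, ∑ y, (PXC x * W x y) * (1 - T x y)
              = ∑ y, PXC x * W x y - ∑ y, (PXC x * W x y) * T x y := by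
            intro x
            rw [← Finset.sum_sub_distrib]
            apply Finset.sum_congr rfl
            intro y _
            ring
          simp_rw [hsplit]
          rw [Finset.sum_sub_distrib, e1]
          congr 1
          rw [Finset.sum_comm]
          rw [Finset.sum_congr rfl fun y _ => e2 y]
          rw [Finset.sum_comm]
        exact he.trans herr.symm
end

section
/- Tightness of the lossy source-coding meta-converse: the excess distortion probability satisfies ε_d(C, D) = max_{Q_V} α_{Q[d(V,C) ≤ D]}( P_V, Q_V ), provided P_V(v) < 1 for all v and Pr[d(V,C) > D] > 0. -/
open scoped Classical
open Finset

/-- Theorem 3, equality part: the excess distortion probability of lossy source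
coding satisfies `ε_d(C,D) = max_{Q_V} α_{Q[d(V,C) ≤ D]}(P_V, Q_V)`. -/
theorem stmt_14 {V W : Type*} [Fintype V] [Fintype W]
    (PV : V → ℝ) (hPV0 : ∀ v, 0 ≤ PV v) (hPV1 : ∑ v, PV v = 1)
    (hPVlt : ∀ v, PV v < 1)
    (C : Finset W) (hC : C.Nonempty)
    (d : V → W → ℝ) (hd : ∀ v w, 0 ≤ d v w) (D : ℝ)
    (εd : ℝ) (hεd : εd = ∑ v, if D < C.inf' hC (d v) then PV v else 0)
    (hεdpos : 0 < εd)
    -- `alpha β Q` is the binary trade-off α_β(P_V, Q_V) on 𝒱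
    (alpha : ℝ → (V → ℝ) → ℝ)
    (halpha : ∀ β Q, alpha β Q =
      sInf {e : ℝ | ∃ T : V → ℝ, (∀ v, 0 ≤ T v ∧ T v ≤ 1) ∧
        (∑ v, Q v * T v) ≤ β ∧ e = ∑ v, PV v * (1 - T v)}) :
    IsGreatest {x : ℝ | ∃ Q : V → ℝ, (∀ v, 0 ≤ Q v) ∧ (∑ v, Q v = 1) ∧
        x = alpha (∑ v, if C.inf' hC (d v) ≤ D then Q v else 0) Q} εd := by
  set B : V → Prop := fun v => D < C.inf' hC (d v) with hB
  constructor
  · -- membership: Q proportional to PV on the bad set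
    refine ⟨fun v => if B v then PV v / εd else 0, ?_, ?_, ?_⟩
    · intro v
      by_cases h : B v <;> simp [h]
      exact div_nonneg (hPV0 v) hεdpos.le
    · have : (∑ v, if B v then PV v / εd else 0)
          = (∑ v, if B v then PV v else 0) / εd := by
        rw [Finset.sum_div]
        refine Finset.sum_congr rfl fun v _ => ?_
        by_cases h : B v <;> simp [h]
      rw [this, ← hεd, div_self hεdpos.ne']
    · have hβ : (∑ v, if C.inf' hC (d v) ≤ D then
          (if B v then PV v / εd else 0) else 0) = 0 := by
        refine Finset.sum_eq_zero fun v _ => ?_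
        by_cases h : B v
        · simp [h, not_le.mpr h]
        · simp [h]
      rw [hβ, halpha]
      have hbdd : BddBelow {e : ℝ | ∃ T : V → ℝ, (∀ v, 0 ≤ T v ∧ T v ≤ 1) ∧
          (∑ v, (if B v then PV v / εd else 0) * T v) ≤ 0 ∧
          e = ∑ v, PV v * (1 - T v)} := by
        refine ⟨0, fun e ⟨T, hT, _, he⟩ => ?_⟩
        rw [he]
        exact Finset.sum_nonneg fun v _ =>
          mul_nonneg (hPV0 v) (by linarith [(hT v).2])
      have hmem : εd ∈ {e : ℝ | ∃ T : V → ℝ, (∀ v, 0 ≤ T v ∧ T v ≤ 1) ∧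
          (∑ v, (if B v then PV v / εd else 0) * T v) ≤ 0 ∧
          e = ∑ v, PV v * (1 - T v)} := by
        refine ⟨fun v => if B v then 0 else 1, fun v => ?_, ?_, ?_⟩
        · by_cases h : B v <;> simp [h]
        · refine le_of_eq (Finset.sum_eq_zero fun v _ => ?_)
          by_cases h : B v <;> simp [h]
        · rw [hεd]
          refine Finset.sum_congr rfl fun v _ => ?_
          by_cases h : B v
          · beta_reduce; rw [if_pos h, if_pos h]; ring
          · beta_reduce; rw [if_neg h, if_neg h]; ring
      refine le_antisymm (le_csInf ⟨εd, hmem⟩ ?_) (csInf_le hbdd hmem)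
      rintro e ⟨T, hT, hQT, he⟩
      -- each term of the sum ∑ Q v * T v is zero
      have hterms : ∀ v ∈ Finset.univ,
          (if B v then PV v / εd else 0) * T v = 0 := by
        rw [← Finset.sum_eq_zero_iff_of_nonneg]
        · exact le_antisymm hQT (Finset.sum_nonneg fun v _ => mul_nonneg
            (by by_cases h : B v <;> simp [h, div_nonneg (hPV0 v) hεdpos.le])
            (hT v).1)
        · exact fun v _ => mul_nonneg
            (by by_cases h : B v <;> simp [h, div_nonneg (hPV0 v) hεdpos.le])
            (hT v).1
      rw [he, hεd]
      refine Finset.sum_le_sum fun v _ => ?_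
      by_cases h : B v
      · by_cases hp : PV v = 0
        · rw [if_pos h, hp, zero_mul]
        · have := hterms v (Finset.mem_univ v)
          rw [if_pos h] at this
          have hTv : T v = 0 := by
            rcases mul_eq_zero.mp this with h1 | h1
            · exact absurd h1 (div_ne_zero hp hεdpos.ne')
            · exact h1
          rw [if_pos h, hTv]; ring_nf; rfl
      · rw [if_neg h]
        exact mul_nonneg (hPV0 v) (by linarith [(hT v).2])
  · -- upper bound
    rintro x ⟨Q, hQ0, hQ1, hx⟩
    rw [hx, halpha]
    have hbdd : BddBelow {e : ℝ | ∃ T : V → ℝ, (∀ v, 0 ≤ T v ∧ T v ≤ 1) ∧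
        (∑ v, Q v * T v) ≤ (∑ v, if C.inf' hC (d v) ≤ D then Q v else 0) ∧
        e = ∑ v, PV v * (1 - T v)} := by
      refine ⟨0, fun e ⟨T, hT, _, he⟩ => ?_⟩
      rw [he]
      exact Finset.sum_nonneg fun v _ =>
        mul_nonneg (hPV0 v) (by linarith [(hT v).2])
    refine csInf_le hbdd ⟨fun v => if C.inf' hC (d v) ≤ D then 1 else 0,
      fun v => ?_, ?_, ?_⟩
    · by_cases h : C.inf' hC (d v) ≤ D <;> simp [h]
    · refine le_of_eq (Finset.sum_congr rfl fun v _ => ?_)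
      by_cases h : C.inf' hC (d v) ≤ D <;> simp [h]
    · rw [hεd]
      refine Finset.sum_congr rfl fun v _ => ?_
      by_cases h : C.inf' hC (d v) ≤ D
      · beta_reduce; rw [if_pos h, if_neg (not_lt.mpr h)]; ring
      · beta_reduce; rw [if_neg h, if_pos (not_le.mp h)]; ring
end

section
/- Kostina–Verdú-type converse for lossy compression: ε_d(C, D) ≥ max_{Q_V} α_{β'}( P_V, Q_V ) where β' = M · sup_{w ∈ 𝒲} Q[d(V,w) ≤ D], under the assumptions P_V(v) < 1 for all v. -/
open scoped Classical
open Finset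

/-- Kostina–Verdú-type converse for lossy compression:
`ε_d(C,D) ≥ α_{M·sup_w Q[d(V,w) ≤ D]}(P_V, Q_V)` for every `Q_V`. -/
theorem stmt_15 {V W : Type*} [Fintype V] [Fintype W] [Nonempty W]
    (PV : V → ℝ) (hPV0 : ∀ v, 0 ≤ PV v) (hPV1 : ∑ v, PV v = 1)
    (hPVlt : ∀ v, PV v < 1)
    (M : ℕ) (C : Finset W) (hC : C.Nonempty) (hCM : C.card = M)
    (d : V → W → ℝ) (hd : ∀ v w, 0 ≤ d v w) (D : ℝ)
    (εd : ℝ) (hεd : εd = ∑ v, if D < C.inf' hC (d v) then PV v else 0) :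
    ∀ Q : V → ℝ, (∀ v, 0 ≤ Q v) → (∑ v, Q v = 1) →
      εd ≥ sInf {e : ℝ | ∃ T : V → ℝ, (∀ v, 0 ≤ T v ∧ T v ≤ 1) ∧
        (∑ v, Q v * T v) ≤ (M : ℝ) * ⨆ w, (∑ v, if d v w ≤ D then Q v else 0) ∧
        e = ∑ v, PV v * (1 - T v)} := by
  intro Q hQ0 hQ1
  have hsup : ∀ w : W, (∑ v, if d v w ≤ D then Q v else 0)
      ≤ ⨆ w, (∑ v, if d v w ≤ D then Q v else 0) := fun w =>
    le_ciSup (f := fun w => ∑ v, if d v w ≤ D then Q v else 0)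
      (Set.Finite.bddAbove (Set.finite_range _)) w
  set T : V → ℝ := fun v => if D < C.inf' hC (d v) then 0 else 1 with hT
  apply csInf_le
  · refine ⟨0, fun e he => ?_⟩
    obtain ⟨T', hT'b, _, he⟩ := he
    rw [he]
    exact Finset.sum_nonneg fun v _ => mul_nonneg (hPV0 v) (by linarith [(hT'b v).2])
  · refine ⟨T, fun v => ?_, ?_, ?_⟩
    · simp only [hT]; split <;> norm_num
    · calc ∑ v, Q v * T v
          ≤ ∑ v, ∑ w ∈ C, (if d v w ≤ D then Q v else 0) := by
            apply Finset.sum_le_sum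
            intro v _
            by_cases h : D < C.inf' hC (d v)
            · simp only [hT, if_pos h, mul_zero]
              exact Finset.sum_nonneg fun w _ => by
                by_cases h' : d v w ≤ D <;> simp [h', hQ0 v]
            · simp only [hT, if_neg h, mul_one]
              push_neg at h
              obtain ⟨w, hw, hdw⟩ := (Finset.inf'_le_iff hC).mp h
              have := Finset.single_le_sum
                (f := fun w' => if d v w' ≤ D then Q v else 0)
                (fun i _ => by by_cases h' : d v i ≤ D <;> simp [h', hQ0 v]) hw
              simpa [if_pos hdw] using this
        _ = ∑ w ∈ C, ∑ v, (if d v w ≤ D then Q v else 0) := Finset.sum_comm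
        _ ≤ ∑ _w ∈ C, ⨆ w, (∑ v, if d v w ≤ D then Q v else 0) :=
            Finset.sum_le_sum fun w _ => hsup w
        _ = (M : ℝ) * ⨆ w, (∑ v, if d v w ≤ D then Q v else 0) := by
            rw [Finset.sum_const, hCM, nsmul_eq_mul]
    · rw [hεd]
      apply Finset.sum_congr rfl
      intro v _
      simp only [hT]
      by_cases h : D < C.inf' hC (d v)
      · rw [if_pos h, if_pos h]; ring
      · rw [if_neg h, if_neg h]; ring
end

section
/- The MAP test with uniform tie-breaking, viewed as a binary test T_MAP(0|v,y) = P^{MAP}_{V̂|Y}(v|y) discriminating P_{VY} against Q_V × Q_Y* (Q_V uniform), achieves the Neyman–Pearson optimum: ε₀(P_{VY}, T_MAP) = α_{1/M}( P_{VY}, Q_V × Q_Y* ), and ε₁(Q_V × Q_Y*, T_MAP) = 1/M. -/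
open scoped Classical
open Finset

/-- The MAP test with uniform tie-breaking, viewed as a binary test
`T_MAP(0|v,y) = P^{MAP}(v|y)` between `P_{VY}` and `Q_V × Q_Y*` (`Q_V` uniform),
is Neyman–Pearson optimal: `ε₀(P_{VY}, T_MAP) = α_{1/M}(P_{VY}, Q_V × Q_Y*)`,
and its type-1 error is `ε₁(Q_V × Q_Y*, T_MAP) = 1/M`. -/
theorem stmt_17 {V Y : Type*} [Fintype V] [Fintype Y] [Nonempty V]
    (M : ℕ) (hM : M = Fintype.card V)
    (P : V → Y → ℝ) (hP0 : ∀ v y, 0 ≤ P v y) (hP1 : ∑ v, ∑ y, P v y = 1)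
    (μ : ℝ) (hμ : μ = ∑ y, ⨆ v, P v y) (hμpos : 0 < μ)
    (Qstar : Y → ℝ) (hQstar : ∀ y, Qstar y = (⨆ v, P v y) / μ)
    (TMAP : V → Y → ℝ)
    (hTMAP : ∀ v y, TMAP v y =
      if P v y = (⨆ v', P v' y) then
        ((univ.filter (fun v' : V => P v' y = (⨆ v'', P v'' y))).card : ℝ)⁻¹
      else 0) :
    (∑ v, ∑ y, P v y * (1 - TMAP v y) =
      sInf {e : ℝ | ∃ T : V → Y → ℝ, (∀ v y, 0 ≤ T v y ∧ T v y ≤ 1) ∧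
        (∑ v, ∑ y, ((M : ℝ)⁻¹ * Qstar y) * T v y) ≤ (M : ℝ)⁻¹ ∧
        e = ∑ v, ∑ y, P v y * (1 - T v y)}) ∧
    ∑ v, ∑ y, ((M : ℝ)⁻¹ * Qstar y) * TMAP v y = (M : ℝ)⁻¹ := by
  have hMpos : (0:ℝ) < M := by
    rw [hM]; exact_mod_cast Fintype.card_pos
  have hle : ∀ v y, P v y ≤ ⨆ v', P v' y := by
    intro v y
    exact le_ciSup (f := fun v' => P v' y) (Set.Finite.bddAbove (Set.finite_range _)) v
  have hmax : ∀ y, ∃ v, P v y = ⨆ v', P v' y := by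
    intro y
    obtain ⟨v, hv⟩ := Finite.exists_max (fun v => P v y)
    exact ⟨v, le_antisymm (hle v y) (ciSup_le hv)⟩
  have hs0 : ∀ y, 0 ≤ ⨆ v', P v' y := by
    intro y
    obtain ⟨v, hv⟩ := hmax y
    rw [← hv]; exact hP0 v y
  have hncard : ∀ y : Y,
      (0:ℝ) < ((univ.filter (fun v' : V => P v' y = (⨆ v'', P v'' y))).card : ℝ) := by
    intro y
    obtain ⟨v, hv⟩ := hmax y
    have : 0 < (univ.filter (fun v' : V => P v' y = (⨆ v'', P v'' y))).card :=
      Finset.card_pos.mpr ⟨v, by simp [hv]⟩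
    exact_mod_cast this
  -- rows of TMAP sum to 1
  have hrow : ∀ y, ∑ v, TMAP v y = 1 := by
    intro y
    have h1 : ∑ v, TMAP v y =
        ∑ v ∈ univ.filter (fun v' : V => P v' y = (⨆ v'', P v'' y)),
          ((univ.filter (fun v' : V => P v' y = (⨆ v'', P v'' y))).card : ℝ)⁻¹ := by
      rw [Finset.sum_filter]
      exact Finset.sum_congr rfl fun v _ => hTMAP v y
    rw [h1, Finset.sum_const, nsmul_eq_mul, mul_inv_cancel₀ (ne_of_gt (hncard y))]
  -- P-weighted rows of TMAP sum to the sup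
  have hProw : ∀ y, ∑ v, P v y * TMAP v y = ⨆ v', P v' y := by
    intro y
    have h1 : ∑ v, P v y * TMAP v y =
        ∑ v ∈ univ.filter (fun v' : V => P v' y = (⨆ v'', P v'' y)),
          (⨆ v'', P v'' y) *
          ((univ.filter (fun v' : V => P v' y = (⨆ v'', P v'' y))).card : ℝ)⁻¹ := by
      rw [Finset.sum_filter]
      refine Finset.sum_congr rfl fun v _ => ?_
      rw [hTMAP]
      by_cases h : P v y = ⨆ v', P v' y
      · simp [h]
      · simp [h]
    rw [h1, Finset.sum_const, nsmul_eq_mul, mul_comm, mul_assoc,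
      inv_mul_cancel₀ (ne_of_gt (hncard y)), mul_one]
  have hε0 : ∑ v, ∑ y, P v y * (1 - TMAP v y) = 1 - μ := by
    have : ∑ v, ∑ y, P v y * (1 - TMAP v y)
        = (∑ v, ∑ y, P v y) - ∑ v, ∑ y, P v y * TMAP v y := by
      rw [← Finset.sum_sub_distrib]
      refine Finset.sum_congr rfl fun v _ => ?_
      rw [← Finset.sum_sub_distrib]
      exact Finset.sum_congr rfl fun y _ => by ring
    rw [this, hP1, Finset.sum_comm, hμ]
    congr 1
    exact Finset.sum_congr rfl fun y _ => hProw y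
  have hQsum : ∑ y, Qstar y = 1 := by
    have : ∑ y, Qstar y = (∑ y, ⨆ v, P v y) / μ := by
      rw [Finset.sum_div]
      exact Finset.sum_congr rfl fun y _ => hQstar y
    rw [this, ← hμ, div_self (ne_of_gt hμpos)]
  have hε1 : ∑ v, ∑ y, ((M : ℝ)⁻¹ * Qstar y) * TMAP v y = (M : ℝ)⁻¹ := by
    rw [Finset.sum_comm]
    have : ∀ y : Y, ∑ v, ((M : ℝ)⁻¹ * Qstar y) * TMAP v y = (M : ℝ)⁻¹ * Qstar y := by
      intro y
      rw [← Finset.mul_sum, hrow y, mul_one]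
    rw [Finset.sum_congr rfl fun y _ => this y, ← Finset.mul_sum, hQsum, mul_one]
  refine ⟨?_, hε1⟩
  -- membership of TMAP's error in the set
  have hTmem : (1 - μ) ∈ {e : ℝ | ∃ T : V → Y → ℝ, (∀ v y, 0 ≤ T v y ∧ T v y ≤ 1) ∧
        (∑ v, ∑ y, ((M : ℝ)⁻¹ * Qstar y) * T v y) ≤ (M : ℝ)⁻¹ ∧
        e = ∑ v, ∑ y, P v y * (1 - T v y)} := by
    refine ⟨TMAP, fun v y => ?_, le_of_eq hε1, hε0.symm⟩
    rw [hTMAP]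
    by_cases h : P v y = ⨆ v', P v' y
    · simp only [h, if_true]
      constructor
      · positivity
      · have h1 : (1:ℝ) ≤ ((univ.filter (fun v' : V => P v' y = (⨆ v'', P v'' y))).card : ℝ) := by
          have := hncard y
          have : (1:ℕ) ≤ (univ.filter (fun v' : V => P v' y = (⨆ v'', P v'' y))).card := by
            exact_mod_cast this
          exact_mod_cast this
        exact inv_le_one_of_one_le₀ h1
    · simp [h]
  -- lower bound
  have hlb : ∀ e ∈ {e : ℝ | ∃ T : V → Y → ℝ, (∀ v y, 0 ≤ T v y ∧ T v y ≤ 1) ∧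
        (∑ v, ∑ y, ((M : ℝ)⁻¹ * Qstar y) * T v y) ≤ (M : ℝ)⁻¹ ∧
        e = ∑ v, ∑ y, P v y * (1 - T v y)}, 1 - μ ≤ e := by
    rintro e ⟨T, hT01, hTcon, rfl⟩
    have hsplit : ∑ v, ∑ y, P v y * (1 - T v y)
        = (∑ v, ∑ y, P v y) - ∑ v, ∑ y, P v y * T v y := by
      rw [← Finset.sum_sub_distrib]
      refine Finset.sum_congr rfl fun v _ => ?_
      rw [← Finset.sum_sub_distrib]
      exact Finset.sum_congr rfl fun y _ => by ring
    have hPT : ∑ v, ∑ y, P v y * T v y ≤ μ := by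
      have step1 : ∑ v, ∑ y, P v y * T v y
          ≤ ∑ v, ∑ y, (μ * Qstar y) * T v y := by
        refine Finset.sum_le_sum fun v _ => Finset.sum_le_sum fun y _ => ?_
        have hq : μ * Qstar y = ⨆ v', P v' y := by
          rw [hQstar]; field_simp
        rw [hq]
        exact mul_le_mul_of_nonneg_right (hle v y) (hT01 v y).1
      have step2 : ∑ v, ∑ y, (μ * Qstar y) * T v y
          = (μ * M) * ∑ v, ∑ y, ((M : ℝ)⁻¹ * Qstar y) * T v y := by
        rw [Finset.mul_sum]
        refine Finset.sum_congr rfl fun v _ => ?_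
        rw [Finset.mul_sum]
        refine Finset.sum_congr rfl fun y _ => ?_
        field_simp
      have step3 : (μ * M) * ∑ v, ∑ y, ((M : ℝ)⁻¹ * Qstar y) * T v y
          ≤ (μ * M) * (M : ℝ)⁻¹ := by
        exact mul_le_mul_of_nonneg_left hTcon (by positivity)
      have step4 : (μ * M) * (M : ℝ)⁻¹ = μ := by
        field_simp
      linarith
    rw [hsplit, hP1]
    linarith
  rw [hε0]
  exact (le_antisymm (le_csInf ⟨_, hTmem⟩ hlb) (csInf_le ⟨1 - μ, hlb⟩ hTmem))
end
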